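/- arXiv:1810.02616 — 5 statements merged into one kernel-verified Lean document; each statement's English description precedes it below -/
import Mathlib

section
/- Let (V, g) be a finite-dimensional real inner product space, T an alternating 3-form on V, and h ∈ so(V) a skew-symmetric endomorphism with h·T = 0, i.e. T(hx, y, z) + T(x, hy, z) + T(x, y, hz) = 0 for all x, y, z ∈ V. Suppose V = V₁ ⊕ V₂ is an orthogonal direct-sum decomposition such that T(x, y, z) = 0 whenever x, y, z do not all lie in V₁ or all lie in V₂ (write T = T₁ + T₂ with T_i supported on V_i), and suppose in addition that either (i) T has trivial kernel, i.e. {v ∈ V : T(v, ·, ·) = 0} = {0}, or (ii) V₂ = {v ∈ V : T(v, ·, ·) = 0} and V₁ = V₂^⊥ (so T₂ = 0). Then h(V₁) ⊆ V₁ and h(V₂) ⊆ V₂. -/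
open RealInnerProductSpace

section Helpers
variable {V : Type*} [AddCommGroup V] [Module ℝ V]

private lemma upd0' (a b c x : V) : Function.update ![a,b,c] 0 x = ![x,b,c] := by
  ext i; fin_cases i <;> simp
private lemma upd1' (a b c x : V) : Function.update ![a,b,c] 1 x = ![a,x,c] := by
  ext i; fin_cases i <;> simp
private lemma upd2' (a b c x : V) : Function.update ![a,b,c] 2 x = ![a,b,x] := by
  ext i; fin_cases i <;> simp

private lemma Tadd0 (T : AlternatingMap ℝ V ℝ (Fin 3)) (x x' y z : V) :
    T ![x + x', y, z] = T ![x,y,z] + T ![x',y,z] := by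
  have := T.map_update_add ![x,y,z] 0 x x'
  simpa [upd0'] using this
private lemma Tadd1 (T : AlternatingMap ℝ V ℝ (Fin 3)) (x y y' z : V) :
    T ![x, y + y', z] = T ![x,y,z] + T ![x,y',z] := by
  have := T.map_update_add ![x,y,z] 1 y y'
  simpa [upd1'] using this
private lemma Tadd2 (T : AlternatingMap ℝ V ℝ (Fin 3)) (x y z z' : V) :
    T ![x, y, z + z'] = T ![x,y,z] + T ![x,y,z'] := by
  have := T.map_update_add ![x,y,z] 2 z z'
  simpa [upd2'] using this
private lemma Tzero0 (T : AlternatingMap ℝ V ℝ (Fin 3)) (y z : V) : T ![0,y,z] = 0 :=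
  T.map_coord_zero 0 (by simp)
private lemma Tzero1 (T : AlternatingMap ℝ V ℝ (Fin 3)) (x z : V) : T ![x,0,z] = 0 :=
  T.map_coord_zero 1 (by simp)
private lemma Tzero2 (T : AlternatingMap ℝ V ℝ (Fin 3)) (x y : V) : T ![x,y,0] = 0 :=
  T.map_coord_zero 2 (by simp)

end Helpers

/-- Let `(V,⟪·,·⟫)` be a finite-dimensional real inner product
space, `T` an alternating 3-form and `h ∈ so(V)` with `h · T = 0`.  Suppose
`V = V₁ ⊕ V₂` is an orthogonal decomposition supporting a splitting `T = T₁ + T₂`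
(i.e. `T` vanishes on decomposable arguments unless they all lie in `V₁` or all in
`V₂`), and that either `T` has trivial kernel or `V₂` is the kernel of `T` with
`V₁ = V₂ᗮ`.  Then `h` leaves both `V₁` and `V₂` invariant. -/
theorem statement1 {V : Type*} [NormedAddCommGroup V] [InnerProductSpace ℝ V]
    [FiniteDimensional ℝ V]
    (T : AlternatingMap ℝ V ℝ (Fin 3))
    (h : V →ₗ[ℝ] V) (hskew : ∀ x y : V, ⟪h x, y⟫ = - ⟪x, h y⟫)
    (hT : ∀ x y z : V, T ![h x, y, z] + T ![x, h y, z] + T ![x, y, h z] = 0)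
    (V₁ V₂ : Submodule ℝ V) (hc : IsCompl V₁ V₂)
    (horth : ∀ x ∈ V₁, ∀ y ∈ V₂, ⟪x, y⟫ = 0)
    (hsplit : ∀ x y z : V, (x ∈ V₁ ∨ x ∈ V₂) → (y ∈ V₁ ∨ y ∈ V₂) →
      (z ∈ V₁ ∨ z ∈ V₂) →
      ¬((x ∈ V₁ ∧ y ∈ V₁ ∧ z ∈ V₁) ∨ (x ∈ V₂ ∧ y ∈ V₂ ∧ z ∈ V₂)) →
      T ![x, y, z] = 0)
    (hcase : ({v : V | ∀ w u : V, T ![v, w, u] = 0} = {0}) ∨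
      ((∀ v : V, v ∈ V₂ ↔ ∀ w u : V, T ![v, w, u] = 0) ∧ V₁ = V₂ᗮ)) :
    (∀ v ∈ V₁, h v ∈ V₁) ∧ (∀ v ∈ V₂, h v ∈ V₂) := by
  classical
  -- elements in both V₁ and V₂ are zero
  have disj : ∀ v : V, v ∈ V₁ → v ∈ V₂ → v = 0 := fun v h1 h2 =>
    (Submodule.disjoint_def.mp hc.disjoint) v h1 h2
  -- decomposition of an arbitrary vector
  have decomp : ∀ w : V, ∃ w₁ ∈ V₁, ∃ w₂ ∈ V₂, w = w₁ + w₂ := by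
    intro w
    obtain ⟨a, b, ha, hb, hab⟩ := Submodule.codisjoint_iff_exists_add_eq.mp hc.codisjoint w
    exact ⟨a, ha, b, hb, hab.symm⟩
  -- "mixed" vanishing lemmas, one per pattern
  have m112 : ∀ x y z : V, x ∈ V₁ → y ∈ V₁ → z ∈ V₂ → T ![x,y,z] = 0 := by
    intro x y z hx hy hz
    by_cases hx0 : x = 0; · simp [hx0, Tzero0]
    by_cases hz0 : z = 0; · simp [hz0, Tzero2]
    exact hsplit x y z (Or.inl hx) (Or.inl hy) (Or.inr hz)
      (by rintro (⟨_,_,hz1⟩|⟨hx2,_,_⟩); exacts [hz0 (disj z hz1 hz), hx0 (disj x hx hx2)])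
  have m121 : ∀ x y z : V, x ∈ V₁ → y ∈ V₂ → z ∈ V₁ → T ![x,y,z] = 0 := by
    intro x y z hx hy hz
    by_cases hx0 : x = 0; · simp [hx0, Tzero0]
    by_cases hy0 : y = 0; · simp [hy0, Tzero1]
    exact hsplit x y z (Or.inl hx) (Or.inr hy) (Or.inl hz)
      (by rintro (⟨_,hy1,_⟩|⟨hx2,_,_⟩); exacts [hy0 (disj y hy1 hy), hx0 (disj x hx hx2)])
  have m122 : ∀ x y z : V, x ∈ V₁ → y ∈ V₂ → z ∈ V₂ → T ![x,y,z] = 0 := by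
    intro x y z hx hy hz
    by_cases hx0 : x = 0; · simp [hx0, Tzero0]
    by_cases hy0 : y = 0; · simp [hy0, Tzero1]
    exact hsplit x y z (Or.inl hx) (Or.inr hy) (Or.inr hz)
      (by rintro (⟨_,hy1,_⟩|⟨hx2,_,_⟩); exacts [hy0 (disj y hy1 hy), hx0 (disj x hx hx2)])
  have m211 : ∀ x y z : V, x ∈ V₂ → y ∈ V₁ → z ∈ V₁ → T ![x,y,z] = 0 := by
    intro x y z hx hy hz
    by_cases hx0 : x = 0; · simp [hx0, Tzero0]
    by_cases hy0 : y = 0; · simp [hy0, Tzero1]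
    exact hsplit x y z (Or.inr hx) (Or.inl hy) (Or.inl hz)
      (by rintro (⟨hx1,_,_⟩|⟨_,hy2,_⟩); exacts [hx0 (disj x hx1 hx), hy0 (disj y hy hy2)])
  have m212 : ∀ x y z : V, x ∈ V₂ → y ∈ V₁ → z ∈ V₂ → T ![x,y,z] = 0 := by
    intro x y z hx hy hz
    by_cases hx0 : x = 0; · simp [hx0, Tzero0]
    by_cases hy0 : y = 0; · simp [hy0, Tzero1]
    exact hsplit x y z (Or.inr hx) (Or.inl hy) (Or.inr hz)
      (by rintro (⟨hx1,_,_⟩|⟨_,hy2,_⟩); exacts [hx0 (disj x hx1 hx), hy0 (disj y hy hy2)])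
  have m221 : ∀ x y z : V, x ∈ V₂ → y ∈ V₂ → z ∈ V₁ → T ![x,y,z] = 0 := by
    intro x y z hx hy hz
    by_cases hx0 : x = 0; · simp [hx0, Tzero0]
    by_cases hz0 : z = 0; · simp [hz0, Tzero2]
    exact hsplit x y z (Or.inr hx) (Or.inr hy) (Or.inl hz)
      (by rintro (⟨hx1,_,_⟩|⟨_,_,hz2⟩); exacts [hx0 (disj x hx1 hx), hz0 (disj z hz hz2)])
  -- extension of "kernel on its own side" to full kernel
  have ext2 : ∀ b : V, b ∈ V₂ → (∀ w ∈ V₂, ∀ u ∈ V₂, T ![b,w,u] = 0) →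
      ∀ w u : V, T ![b,w,u] = 0 := by
    intro b hb hker w u
    obtain ⟨w₁, hw₁, w₂, hw₂, rfl⟩ := decomp w
    obtain ⟨u₁, hu₁, u₂, hu₂, rfl⟩ := decomp u
    rw [Tadd1, Tadd2, Tadd2,
      m211 b w₁ u₁ hb hw₁ hu₁, m212 b w₁ u₂ hb hw₁ hu₂,
      m221 b w₂ u₁ hb hw₂ hu₁, hker w₂ hw₂ u₂ hu₂]
    ring
  have ext1 : ∀ a : V, a ∈ V₁ → (∀ w ∈ V₁, ∀ u ∈ V₁, T ![a,w,u] = 0) →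
      ∀ w u : V, T ![a,w,u] = 0 := by
    intro a ha hker w u
    obtain ⟨w₁, hw₁, w₂, hw₂, rfl⟩ := decomp w
    obtain ⟨u₁, hu₁, u₂, hu₂, rfl⟩ := decomp u
    rw [Tadd1, Tadd2, Tadd2,
      m112 a w₁ u₂ ha hw₁ hu₂, m121 a w₂ u₁ ha hw₂ hu₁,
      m122 a w₂ u₂ ha hw₂ hu₂, hker w₁ hw₁ u₁ hu₁]
    ring
  -- main computation, case v ∈ V₁ : the V₂-component of h v is in the kernel of T
  have key1 : ∀ v ∈ V₁, ∃ a ∈ V₁, ∃ b ∈ V₂, h v = a + b ∧ ∀ w u : V, T ![b,w,u] = 0 := by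
    intro v hv
    obtain ⟨a, ha, b, hb, hab⟩ := decomp (h v)
    refine ⟨a, ha, b, hb, hab, ext2 b hb ?_⟩
    intro w hw u hu
    have e1 : T ![h v, w, u] = T ![b, w, u] := by
      rw [hab, Tadd0, m122 a w u ha hw hu]; ring
    have e2 : T ![v, h w, u] = 0 := by
      obtain ⟨c, hc1, d, hd2, hcd⟩ := decomp (h w)
      rw [hcd, Tadd1, m112 v c u hv hc1 hu, m122 v d u hv hd2 hu]; ring
    have e3 : T ![v, w, h u] = 0 := by
      obtain ⟨c, hc1, d, hd2, hcd⟩ := decomp (h u)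
      rw [hcd, Tadd2, m121 v w c hv hw hc1, m122 v w d hv hw hd2]; ring
    have := hT v w u
    rw [e2, e3] at this
    linarith [e1]
  -- main computation, case v ∈ V₂ : the V₁-component of h v is in the kernel of T
  have key2 : ∀ v ∈ V₂, ∃ a ∈ V₁, ∃ b ∈ V₂, h v = a + b ∧ ∀ w u : V, T ![a,w,u] = 0 := by
    intro v hv
    obtain ⟨a, ha, b, hb, hab⟩ := decomp (h v)
    refine ⟨a, ha, b, hb, hab, ext1 a ha ?_⟩
    intro w hw u hu
    have e1 : T ![h v, w, u] = T ![a, w, u] := by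
      rw [hab, Tadd0, m211 b w u hb hw hu]; ring
    have e2 : T ![v, h w, u] = 0 := by
      obtain ⟨c, hc1, d, hd2, hcd⟩ := decomp (h w)
      rw [hcd, Tadd1, m211 v c u hv hc1 hu, m221 v d u hv hd2 hu]; ring
    have e3 : T ![v, w, h u] = 0 := by
      obtain ⟨c, hc1, d, hd2, hcd⟩ := decomp (h u)
      rw [hcd, Tadd2, m211 v w c hv hw hc1, m212 v w d hv hw hd2]; ring
    have := hT v w u
    rw [e2, e3] at this
    linarith [e1]
  rcases hcase with hker | ⟨hker, hV1⟩
  · -- trivial kernel case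
    have triv : ∀ x : V, (∀ w u : V, T ![x,w,u] = 0) → x = 0 := by
      intro x hx
      have : x ∈ ({v : V | ∀ w u : V, T ![v, w, u] = 0}) := hx
      rw [hker] at this
      simpa using this
    constructor
    · intro v hv
      obtain ⟨a, ha, b, hb, hab, hbker⟩ := key1 v hv
      rw [hab, triv b hbker, add_zero]; exact ha
    · intro v hv
      obtain ⟨a, ha, b, hb, hab, haker⟩ := key2 v hv
      rw [hab, triv a haker, zero_add]; exact hb
  · -- V₂ is the kernel, V₁ = V₂ᗮ
    have h2 : ∀ v ∈ V₂, h v ∈ V₂ := by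
      intro v hv
      rw [hker]
      intro w u
      have hv' := (hker v).1 hv
      have := hT v w u
      rw [hv' (h w) u, hv' w (h u)] at this
      linarith
    refine ⟨?_, h2⟩
    intro v hv
    rw [hV1] at hv ⊢
    rw [Submodule.mem_orthogonal]
    intro u hu
    have h1 : ⟪h u, v⟫ = 0 := (Submodule.mem_orthogonal V₂ v).1 hv (h u) (h2 u hu)
    linarith [hskew v u, real_inner_comm u (h v), real_inner_comm v (h u), h1]
end

section
/- Let g be a finite-dimensional real simple Lie algebra whose Killing form B is negative definite (a compact simple Lie algebra), equipped with the ad(g)-invariant inner product ḡ := -cB for some c > 0. Let h ⊊ g be any proper Lie subalgebra and m := h^⊥ the orthogonal complement with respect to ḡ. Then (g = h ⊕ m, ḡ|_{m×m}) is a naturally reductive decomposition, and either its torsion T is non-zero and the decomposition is irreducible, or T = 0, in which case [m, m] ⊆ h and the decomposition is that of an irreducible symmetric space (in particular m is an irreducible ad(h)-module). -/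
noncomputable section

/-- The projection onto the submodule `p` along the complement `q`,
as an endomorphism of the ambient module. -/
def projOnto {g : Type*} [AddCommGroup g] [Module ℝ g] (p q : Submodule ℝ g)
    (hc : IsCompl p q) : g →ₗ[ℝ] g :=
  p.subtype ∘ₗ (p.linearProjOfIsCompl q hc)

lemma projOnto_mem {g : Type*} [AddCommGroup g] [Module ℝ g] (p q : Submodule ℝ g)
    (hc : IsCompl p q) (z : g) : projOnto p q hc z ∈ p := by
  simp only [projOnto, LinearMap.coe_comp, Function.comp_apply, Submodule.coe_subtype]; exact (p.linearProjOfIsCompl q hc z).2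

/-- A naturally reductive decomposition `g = h ⊕ m` of the (finite-dimensional real)
Lie algebra `g`, with isotropy algebra `h`, reductive complement `m`, and a metric
(encoded as a bilinear form on `g` which is required to be symmetric and positive
definite on `m`) satisfying the natural reductivity condition. -/
structure NatRed (g : Type*) [LieRing g] [LieAlgebra ℝ g] where
  h : LieSubalgebra ℝ g
  m : Submodule ℝ g
  compl : IsCompl h.toSubmodule m
  lie_hm : ∀ x ∈ h, ∀ y ∈ m, ⁅x, y⁆ ∈ m
  met : LinearMap.BilinForm ℝ g
  met_symm : ∀ x y : g, met x y = met y x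
  met_posdef : ∀ x ∈ m, x ≠ 0 → 0 < met x x
  natred : ∀ x ∈ m, ∀ y ∈ m, ∀ z ∈ m,
      met ((projOnto m h.toSubmodule compl.symm) ⁅x, y⁆) z
        = - met y ((projOnto m h.toSubmodule compl.symm) ⁅x, z⁆)

namespace NatRed

variable {g : Type*} [LieRing g] [LieAlgebra ℝ g]

/-- Projection onto `m` along `h`. -/
def projm (D : NatRed g) : g →ₗ[ℝ] g := projOnto D.m D.h.toSubmodule D.compl.symm

/-- Projection onto `h` along `m`. -/
def projh (D : NatRed g) : g →ₗ[ℝ] g := projOnto D.h.toSubmodule D.m D.compl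

/-- The torsion `T(x,y) = -[x,y]_m`. -/
def T (D : NatRed g) (x y : g) : g := - D.projm ⁅x, y⁆

lemma T_mem (D : NatRed g) (x y : g) : D.T x y ∈ D.m :=
  neg_mem (projOnto_mem _ _ _ _)

/-- The torsion `3`-form `T(x,y,z) = g(T(x,y),z) = -g([x,y]_m, z)`. -/
def T3 (D : NatRed g) (x y z : g) : ℝ := D.met (D.T x y) z

/-- The curvature `4`-tensor `R(x,y,u,v) = g(R(x,y)u,v) = -g([[x,y]_h,u],v)`. -/
def R4 (D : NatRed g) (x y u v : g) : ℝ := - D.met ⁅D.projh ⁅x, y⁆, u⁆ v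

/-- The decomposition is effective if `ad : h → so(m)` is injective. -/
def Effective (D : NatRed g) : Prop :=
  ∀ x ∈ D.h, (∀ y ∈ D.m, ⁅x, y⁆ = 0) → x = 0

/-- `g` is the transvection algebra of the decomposition:  the decomposition is
effective and `ad(h) = im(R)`, equivalently `h = [m,m]_h`. -/
def IsTransvection (D : NatRed g) : Prop :=
  D.Effective ∧
    D.h.toSubmodule
      = Submodule.span ℝ {z : g | ∃ x ∈ D.m, ∃ y ∈ D.m, z = D.projh ⁅x, y⁆}

/-- The torsion `3`-form splits along a non-trivial orthogonal decomposition of the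
subspace `p`. -/
def SplitsOn (D : NatRed g) (p : Submodule ℝ g) : Prop :=
  ∃ p₁ p₂ : Submodule ℝ g, p₁ ≤ p ∧ p₂ ≤ p ∧ p₁ ≠ ⊥ ∧ p₂ ≠ ⊥ ∧ p₁ ⊔ p₂ = p ∧
    (∀ x ∈ p₁, ∀ y ∈ p₂, D.met x y = 0) ∧
    (∀ x y z : g, (x ∈ p₁ ∨ x ∈ p₂) → (y ∈ p₁ ∨ y ∈ p₂) → (z ∈ p₁ ∨ z ∈ p₂) →
      ¬((x ∈ p₁ ∧ y ∈ p₁ ∧ z ∈ p₁) ∨ (x ∈ p₂ ∧ y ∈ p₂ ∧ z ∈ p₂)) →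
      D.T3 x y z = 0)

/-- The decomposition is reducible if its torsion splits along a non-trivial
orthogonal decomposition `m = m₁ ⊕ m₂`. -/
def Reducible (D : NatRed g) : Prop := D.SplitsOn D.m

/-- The orthogonal complement (with respect to the metric) of a subspace `p`
inside `m`. -/
def orthIn (D : NatRed g) (p : Submodule ℝ g) : Submodule ℝ g :=
  D.m ⊓ LinearMap.BilinForm.orthogonal D.met p

end NatRed

/-- An abelian Lie ideal. -/
def IsAbelianIdeal {g : Type*} [LieRing g] [LieAlgebra ℝ g] (a : LieIdeal ℝ g) : Prop :=
  ∀ x ∈ a, ∀ y ∈ a, ⁅x, y⁆ = 0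

/-- The subspace of elements whose bracket with everything in `p` vanishes. -/
def lieAnn {g : Type*} [LieRing g] [LieAlgebra ℝ g] (p : Submodule ℝ g) :
    Submodule ℝ g where
  carrier := {k : g | ∀ x ∈ p, ⁅k, x⁆ = 0}
  add_mem' := by
    intro a b ha hb x hx
    rw [add_lie, ha x hx, hb x hx, add_zero]
  zero_mem' := by
    intro x hx
    simp
  smul_mem' := by
    intro c k hk x hx
    rw [smul_lie, hk x hx, smul_zero]

/-- The set `s(g)` of skew-symmetric derivations of the naturally reductive
decomposition: derivations of `g` vanishing on `h`, preserving `m` and acting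
skew-symmetrically on `m`. -/
def sg {g : Type*} [LieRing g] [LieAlgebra ℝ g] (D : NatRed g) :
    Set (Module.End ℝ g) :=
  {f | (∀ x y : g, f ⁅x, y⁆ = ⁅f x, y⁆ + ⁅x, f y⁆) ∧
       (∀ x ∈ D.h, f x = 0) ∧ (∀ x ∈ D.m, f x ∈ D.m) ∧
       (∀ x ∈ D.m, ∀ y ∈ D.m, D.met (f x) y = - D.met x (f y))}

/-- Let `g` be a compact simple Lie algebra (Killing form negative
definite) with invariant inner product `ḡ = -c·B`, `c > 0`, and `h ⊊ g` a proper
subalgebra with `m = h^⊥`.  Then `g = h ⊕ m` is a naturally reductive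
decomposition, and either its torsion is non-zero and the decomposition is
irreducible, or the torsion vanishes, `[m,m] ⊆ h`, and `m` is an irreducible
`ad(h)`-module (an irreducible symmetric space). -/
theorem statement4 {g : Type*} [LieRing g] [LieAlgebra ℝ g] [FiniteDimensional ℝ g]
    (hsimple : LieAlgebra.IsSimple ℝ g)
    (hneg : ∀ x : g, x ≠ 0 → killingForm ℝ g x x < 0)
    (c : ℝ) (hc : 0 < c)
    (h : LieSubalgebra ℝ g) (hproper : h ≠ ⊤)
    (m : Submodule ℝ g)
    (hm : m = LinearMap.BilinForm.orthogonal ((-c) • killingForm ℝ g) h.toSubmodule) :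
    ∃ D : NatRed g, D.h = h ∧ D.m = m ∧ D.met = (-c) • killingForm ℝ g ∧
      (((∃ x ∈ m, ∃ y ∈ m, D.projm ⁅x, y⁆ ≠ 0) ∧ ¬ D.Reducible) ∨
       ((∀ x ∈ m, ∀ y ∈ m, D.projm ⁅x, y⁆ = 0) ∧
        (∀ x ∈ m, ∀ y ∈ m, ⁅x, y⁆ ∈ h) ∧
        (∀ p : Submodule ℝ g, p ≤ m → (∀ x ∈ h, ∀ v ∈ p, ⁅x, v⁆ ∈ p) →
          p = ⊥ ∨ p = m))) := by
  classical
  set B : LinearMap.BilinForm ℝ g := (-c) • killingForm ℝ g with hB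
  have happ : ∀ x y : g, B x y = -c * killingForm ℝ g x y := by
    intro x y; simp [hB]
  have hsymm : ∀ x y : g, B x y = B y x := by
    intro x y; rw [happ, happ, LieModule.traceForm_comm]
  have hpos : ∀ x : g, x ≠ 0 → 0 < B x x := by
    intro x hx
    rw [happ]
    have := hneg x hx
    nlinarith
  have hzero : ∀ x : g, B x x = 0 → x = 0 := by
    intro x hx
    by_contra hne
    exact absurd hx (ne_of_gt (hpos x hne))
  have hinv : ∀ x y z : g, B ⁅x, y⁆ z = B x ⁅y, z⁆ := by
    intro x y z
    rw [happ, happ, LieModule.traceForm_apply_lie_apply]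
  have hinv' : ∀ x y z : g, B ⁅x, y⁆ z = - B y ⁅x, z⁆ := by
    intro x y z
    have h1 : B ⁅x, y⁆ z = - B ⁅y, x⁆ z := by
      rw [← lie_skew y x, map_neg]; simp
    rw [h1, hinv]
  have hrefl : B.IsRefl := by
    intro x y hxy
    rw [hsymm]; exact hxy
  have hnd : ∀ p : Submodule ℝ g, (B.restrict p).Nondegenerate := by
    intro p
    constructor <;> intro x hx
    all_goals
      have h1 := hx x
      rw [LinearMap.BilinForm.restrict_apply] at h1
      have h2 : (x : g) = 0 := hzero _ h1
      exact Subtype.ext h2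
  -- `m` is the orthogonal complement of `h`
  have hcompl : IsCompl h.toSubmodule m := by
    rw [hm]
    exact LinearMap.BilinForm.isCompl_orthogonal_of_restrict_nondegenerate hrefl
      (hnd h.toSubmodule)
  have hmm : ∀ y : g, y ∈ m ↔ ∀ u ∈ h.toSubmodule, B u y = 0 := by
    intro y
    rw [hm]
    exact LinearMap.BilinForm.mem_orthogonal_iff
  have horthhm : ∀ u ∈ h.toSubmodule, ∀ y ∈ m, B u y = 0 := by
    intro u hu y hy
    exact (hmm y).mp hy u hu
  have horthmh : ∀ y ∈ m, ∀ u ∈ h.toSubmodule, B y u = 0 := by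
    intro y hy u hu
    rw [hsymm]; exact horthhm u hu y hy
  have hlie_hm : ∀ x ∈ h, ∀ y ∈ m, ⁅x, y⁆ ∈ m := by
    intro u hu y hy
    rw [hmm]
    intro u' hu'
    have : B u' ⁅u, y⁆ = B ⁅u', u⁆ y := (hinv u' u y).symm
    rw [this]
    exact horthhm _ (h.lie_mem hu' hu) y hy
  -- the projection onto m
  set P : g →ₗ[ℝ] g := projOnto m h.toSubmodule hcompl.symm with hP
  have hPmem : ∀ z : g, P z ∈ m := fun z => projOnto_mem _ _ _ _
  have hPid : ∀ z ∈ m, P z = z := by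
    intro z hz
    show (m.subtype ∘ₗ (m.linearProjOfIsCompl h.toSubmodule hcompl.symm)) z = z
    simp only [LinearMap.coe_comp, Function.comp_apply, Submodule.coe_subtype]
    rw [show z = ((⟨z, hz⟩ : m) : g) from rfl, Submodule.linearProjOfIsCompl, Submodule.projectionOnto_apply_left]
  have hPzero : ∀ z ∈ h.toSubmodule, P z = 0 := by
    intro z hz
    show (m.subtype ∘ₗ (m.linearProjOfIsCompl h.toSubmodule hcompl.symm)) z = 0
    simp only [LinearMap.coe_comp, Function.comp_apply, Submodule.coe_subtype]
    rw [show z = ((⟨z, hz⟩ : h.toSubmodule) : g) from rfl,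
      Submodule.linearProjOfIsCompl, Submodule.projectionOnto_apply_right]
    rfl
  have hPh : ∀ z : g, z - P z ∈ h.toSubmodule := by
    intro z
    obtain ⟨u, hu, v, hv, huv⟩ := Submodule.mem_sup.mp
      (show z ∈ h.toSubmodule ⊔ m from by rw [hcompl.sup_eq_top]; trivial)
    have : P z = v := by
      rw [← huv, map_add, hPzero u hu, hPid v hv, zero_add]
    rw [this, ← huv]
    simpa using hu
  have hPmemH : ∀ z : g, P z = 0 → z ∈ h.toSubmodule := by
    intro z hz
    have := hPh z
    rwa [hz, sub_zero] at this
  have hinm : ∀ z : g, z ∈ h.toSubmodule → z ∈ m → z = 0 := by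
    intro z hz hz'
    exact hzero z (horthhm z hz z hz')
  -- workhorse: B (P z) t = B z t for t ∈ m
  have hBP : ∀ z : g, ∀ t ∈ m, B (P z) t = B z t := by
    intro z t ht
    have : B z t = B (z - P z) t + B (P z) t := by
      simp only [map_sub, LinearMap.sub_apply]; ring
    rw [this, hsymm (z - P z) t, horthmh t ht _ (hPh z), zero_add]
  have hBP' : ∀ z : g, ∀ t ∈ m, B t (P z) = B t z := by
    intro z t ht
    rw [hsymm, hBP z t ht, hsymm]
  -- the naturally reductive structure
  have hnatred : ∀ x ∈ m, ∀ y ∈ m, ∀ z ∈ m,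
      B (projOnto m h.toSubmodule hcompl.symm ⁅x, y⁆) z
        = - B y (projOnto m h.toSubmodule hcompl.symm ⁅x, z⁆) := by
    intro x hx y hy z hz
    show B (P ⁅x, y⁆) z = - B y (P ⁅x, z⁆)
    rw [hBP _ z hz, hBP' _ y hy, hinv']
  refine ⟨⟨h, m, hcompl, hlie_hm, B, hsymm, fun x _ hx => hpos x hx, hnatred⟩,
    rfl, rfl, rfl, ?_⟩
  set D : NatRed g := ⟨h, m, hcompl, hlie_hm, B, hsymm, fun x _ hx => hpos x hx, hnatred⟩
    with hDdef
  have hDproj : D.projm = P := rfl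
  have hDmet : D.met = B := rfl
  -- general helper lemmas
  have supOrth : ∀ p : Submodule ℝ g, p ≤ m → p ⊔ (m ⊓ B.orthogonal p) = m := by
    intro p hpm
    have hco : IsCompl p (B.orthogonal p) :=
      LinearMap.BilinForm.isCompl_orthogonal_of_restrict_nondegenerate hrefl (hnd p)
    have h1 : p ⊔ (B.orthogonal p ⊓ m) = (p ⊔ B.orthogonal p) ⊓ m :=
      (sup_inf_assoc_of_le _ hpm).symm
    rw [inf_comm m (B.orthogonal p), h1, hco.sup_eq_top, top_inf_eq]
  have memP : ∀ p q : Submodule ℝ g, p ⊔ q = m → (∀ x ∈ p, ∀ y ∈ q, B x y = 0) →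
      ∀ t ∈ m, (∀ y ∈ q, B t y = 0) → t ∈ p := by
    intro p q hsup horth t htm hty
    obtain ⟨a, ha, b, hb, hab⟩ := Submodule.mem_sup.mp (hsup ▸ htm)
    have hb0 : b = 0 := by
      apply hzero
      have h1 : B t b = 0 := hty b hb
      have h2 : B a b = 0 := horth a ha b hb
      have h3 : B t b = B a b + B b b := by rw [← hab]; simp
      rw [h1, h2, zero_add] at h3; exact h3.symm
    rw [← hab, hb0, add_zero]; exact ha
  -- Lemma D : a fully split invariant piece contradicts simplicity
  have lemD : ∀ p q : Submodule ℝ g, p ≤ m → q ≤ m → p ⊔ q = m →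
      (∀ x ∈ p, ∀ y ∈ q, B x y = 0) → (∀ x ∈ p, ∀ y ∈ q, ⁅x, y⁆ = (0:g)) →
      (∀ x ∈ p, ∀ y ∈ p, P ⁅x, y⁆ ∈ p) → p ≠ ⊥ → q ≠ ⊥ → False := by
    intro p q hpm hqm hsup horth hzero2 hclos hpbot hqbot
    -- [h,p] ⊆ p
    have hp_inv : ∀ u ∈ h.toSubmodule, ∀ w ∈ p, ⁅u, w⁆ ∈ p := by
      intro u hu w hw
      apply memP p q hsup horth _ (hlie_hm u hu w (hpm hw))
      intro y hy
      have h1 : B ⁅u, w⁆ y = B u ⁅w, y⁆ := hinv u w y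
      rw [h1, hzero2 w hw y hy]
      simp
    set J' : Submodule ℝ g :=
      Submodule.span ℝ {t | ∃ a ∈ p, ∃ b ∈ p, t = ⁅a, b⁆ - P ⁅a, b⁆} with hJ'
    have hJ'h : J' ≤ h.toSubmodule := by
      rw [hJ', Submodule.span_le]
      rintro t ⟨a, ha, b, hb, rfl⟩
      exact hPh ⁅a, b⁆
    set a : Submodule ℝ g := p ⊔ J' with ha
    have lemGP : ∀ z : g, ∀ w ∈ p, ⁅z, w⁆ ∈ a := by
      intro z w hw
      obtain ⟨zp, hzp, zq, hzq, hzpq⟩ := Submodule.mem_sup.mp (hsup ▸ hPmem z)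
      have hz : z = (z - P z) + (zp + zq) := by rw [hzpq]; abel
      rw [hz, add_lie, add_lie]
      refine Submodule.add_mem _ ?_ (Submodule.add_mem _ ?_ ?_)
      · exact Submodule.mem_sup_left (hp_inv _ (hPh z) w hw)
      · have hsplit : ⁅zp, w⁆ = (⁅zp, w⁆ - P ⁅zp, w⁆) + P ⁅zp, w⁆ := by abel
        rw [hsplit]
        refine Submodule.add_mem _ ?_ ?_
        · exact Submodule.mem_sup_right (Submodule.subset_span ⟨zp, hzp, w, hw, rfl⟩)
        · exact Submodule.mem_sup_left (hclos zp hzp w hw)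
      · rw [(lie_skew zq w).symm, hzero2 w hw zq hzq, neg_zero]
        exact Submodule.zero_mem _
    have lemAP : ∀ w ∈ a, ∀ y ∈ p, ⁅w, y⁆ ∈ a := by
      intro w hw y hy
      obtain ⟨wp, hwp, wj, hwj, hww⟩ := Submodule.mem_sup.mp hw
      rw [← hww, add_lie]
      refine Submodule.add_mem _ (lemGP wp y hy) ?_
      exact Submodule.mem_sup_left (hp_inv wj (hJ'h hwj) y hy)
    have hIdeal : ∀ z t : g, t ∈ a → ⁅z, t⁆ ∈ a := by
      intro z t ht
      obtain ⟨tp, htp, tj, htj, htt⟩ := Submodule.mem_sup.mp ht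
      rw [← htt, lie_add]
      refine Submodule.add_mem _ (lemGP z tp htp) ?_
      clear htt ht
      induction htj using Submodule.span_induction with
      | mem t ht =>
        obtain ⟨x, hx, y, hy, rfl⟩ := ht
        rw [lie_sub]
        refine Submodule.sub_mem _ ?_ (lemGP z _ (hclos x hx y hy))
        rw [leibniz_lie]
        refine Submodule.add_mem _ (lemAP _ (lemGP z x hx) y hy) ?_
        rw [(lie_skew x ⁅z, y⁆).symm]
        exact Submodule.neg_mem _ (lemAP _ (lemGP z y hy) x hx)
      | zero => rw [lie_zero]; exact Submodule.zero_mem _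
      | add u v hu hv hu' hv' => rw [lie_add]; exact Submodule.add_mem _ hu' hv'
      | smul r u hu hu' => rw [lie_smul]; exact Submodule.smul_mem _ r hu'
    set I : LieIdeal ℝ g := { toSubmodule := a, lie_mem := fun {z t} ht => hIdeal z t ht }
      with hI
    rcases hsimple.eq_bot_or_eq_top I with hIb | hIt
    · obtain ⟨x, hx, hxne⟩ := (Submodule.ne_bot_iff p).mp hpbot
      have hxa : x ∈ I := Submodule.mem_sup_left hx
      rw [hIb] at hxa
      exact hxne ((LieSubmodule.mem_bot _).mp hxa)
    · obtain ⟨y₀, hy₀, hy₀ne⟩ := (Submodule.ne_bot_iff q).mp hqbot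
      have hy₀a : y₀ ∈ I := by rw [hIt]; exact LieSubmodule.mem_top _
      obtain ⟨tp, htp, tj, htj, htt⟩ := Submodule.mem_sup.mp hy₀a
      apply hy₀ne
      apply hzero
      have h1 : B y₀ tp = 0 := by rw [hsymm]; exact horth tp htp y₀ hy₀
      have h2 : B y₀ tj = 0 := horthmh y₀ (hqm hy₀) tj (hJ'h htj)
      have h3 : B y₀ y₀ = B y₀ (tp + tj) := by rw [htt]
      rw [h3, map_add, h1, h2, add_zero]
  have lemMH : ∀ u ∈ h.toSubmodule, ∀ t ∈ m, ⁅t, u⁆ ∈ m := by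
    intro u hu t ht
    rw [(lie_skew t u).symm]
    exact Submodule.neg_mem _ (hlie_hm u hu t ht)
  -- Jacobi lemma: torsion elements of a block annihilate the orthogonal block
  have JL : ∀ C : Submodule ℝ g, C ≤ m →
      (∀ x ∈ C, ∀ y ∈ C, P ⁅x, y⁆ ∈ C) →
      (∀ x ∈ C, ∀ y ∈ m, (∀ s ∈ C, B s y = 0) → P ⁅x, y⁆ = 0) →
      ∀ a ∈ C, ∀ b ∈ C, ∀ y ∈ m, (∀ s ∈ C, B s y = 0) → ⁅P ⁅a, b⁆, y⁆ = (0 : g) := by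
    intro C hCm hclosC hmixC a ha b hb y hym hyo
    have h1 : ⁅b, y⁆ ∈ h.toSubmodule := hPmemH _ (hmixC b hb y hym hyo)
    have h2 : ⁅a, y⁆ ∈ h.toSubmodule := hPmemH _ (hmixC a ha y hym hyo)
    have h3 : ⁅P ⁅a, b⁆, y⁆ ∈ h.toSubmodule :=
      hPmemH _ (hmixC _ (hclosC a ha b hb) y hym hyo)
    have hm1 : ⁅a, ⁅b, y⁆⁆ ∈ m := lemMH _ h1 a (hCm ha)
    have hm2 : ⁅b, ⁅a, y⁆⁆ ∈ m := lemMH _ h2 b (hCm hb)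
    have hm3 : ⁅⁅a, b⁆ - P ⁅a, b⁆, y⁆ ∈ m := hlie_hm _ (hPh _) y hym
    have key : ⁅P ⁅a, b⁆, y⁆
        = ⁅a, ⁅b, y⁆⁆ - ⁅b, ⁅a, y⁆⁆ - ⁅⁅a, b⁆ - P ⁅a, b⁆, y⁆ := by
      rw [sub_lie, lie_lie]; abel
    exact hinm _ h3 (key ▸ Submodule.sub_mem _ (Submodule.sub_mem _ hm1 hm2) hm3)
  -- the dichotomy
  by_cases hT : ∀ x ∈ m, ∀ y ∈ m, P ⁅x, y⁆ = 0
  · -- symmetric case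
    right
    have hmh : ∀ x ∈ m, ∀ y ∈ m, ⁅x, y⁆ ∈ h.toSubmodule := fun x hx y hy =>
      hPmemH _ (hT x hx y hy)
    have hmbot : m ≠ ⊥ := by
      intro hbot
      apply hproper
      have h1 : h.toSubmodule = ⊤ := by
        have := hcompl.sup_eq_top
        rwa [hbot, sup_bot_eq] at this
      ext x
      simp only [LieSubalgebra.mem_top, iff_true]
      have : x ∈ h.toSubmodule := by rw [h1]; trivial
      exact this
    -- h = span of brackets of m
    set J : Submodule ℝ g := Submodule.span ℝ {t | ∃ x ∈ m, ∃ y ∈ m, t = ⁅x, y⁆} with hJ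
    have hJh : J ≤ h.toSubmodule := by
      rw [hJ, Submodule.span_le]
      rintro t ⟨x, hx, y, hy, rfl⟩
      exact hmh x hx y hy
    have lemIm : ∀ w ∈ m ⊔ J, ∀ y ∈ m, ⁅w, y⁆ ∈ m ⊔ J := by
      intro w hw y hy
      obtain ⟨wm, hwm, wj, hwj, hww⟩ := Submodule.mem_sup.mp hw
      rw [← hww, add_lie]
      refine Submodule.add_mem _ ?_ ?_
      · exact Submodule.mem_sup_right (Submodule.subset_span ⟨wm, hwm, y, hy, rfl⟩)
      · exact Submodule.mem_sup_left (hlie_hm wj (hJh hwj) y hy)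
    have lemGm : ∀ z : g, ∀ y ∈ m, ⁅z, y⁆ ∈ m ⊔ J := by
      intro z y hy
      have hz : z = (z - P z) + P z := by abel
      rw [hz, add_lie]
      refine Submodule.add_mem _ ?_ ?_
      · exact Submodule.mem_sup_left (hlie_hm _ (hPh z) y hy)
      · exact lemIm _ (Submodule.mem_sup_left (hPmem z)) y hy
    have hIdeal : ∀ z t : g, t ∈ m ⊔ J → ⁅z, t⁆ ∈ m ⊔ J := by
      intro z t ht
      obtain ⟨tm, htm, tj, htj, htt⟩ := Submodule.mem_sup.mp ht
      rw [← htt, lie_add]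
      refine Submodule.add_mem _ (lemGm z tm htm) ?_
      clear htt ht
      induction htj using Submodule.span_induction with
      | mem t ht =>
        obtain ⟨x, hx, y, hy, rfl⟩ := ht
        rw [leibniz_lie]
        refine Submodule.add_mem _ ?_ ?_
        · obtain ⟨wm, hwm, wj, hwj, hww⟩ := Submodule.mem_sup.mp (lemGm z x hx)
          rw [← hww, add_lie]
          refine Submodule.add_mem _ ?_ ?_
          · exact Submodule.mem_sup_right (Submodule.subset_span ⟨wm, hwm, y, hy, rfl⟩)
          · exact Submodule.mem_sup_left (hlie_hm wj (hJh hwj) y hy)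
        · rw [(lie_skew x ⁅z, y⁆).symm]
          exact Submodule.neg_mem _ (lemIm _ (lemGm z y hy) x hx)
      | zero => rw [lie_zero]; exact Submodule.zero_mem _
      | add u v hu hv hu' hv' => rw [lie_add]; exact Submodule.add_mem _ hu' hv'
      | smul r u hu hu' => rw [lie_smul]; exact Submodule.smul_mem _ r hu'
    set I : LieIdeal ℝ g := { toSubmodule := m ⊔ J, lie_mem := fun {z t} ht => hIdeal z t ht }
      with hI
    have htop : m ⊔ J = ⊤ := by
      rcases hsimple.eq_bot_or_eq_top I with hIb | hIt
      · exfalso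
        obtain ⟨x, hx, hxne⟩ := (Submodule.ne_bot_iff m).mp hmbot
        have hxa : x ∈ I := Submodule.mem_sup_left hx
        rw [hIb] at hxa
        exact hxne ((LieSubmodule.mem_bot _).mp hxa)
      · have : ∀ z : g, z ∈ I := by intro z; rw [hIt]; exact LieSubmodule.mem_top _
        exact eq_top_iff.mpr fun z _ => this z
    have hspan : h.toSubmodule = J := by
      have h1 : h.toSubmodule = h.toSubmodule ⊓ (m ⊔ J) := by rw [htop, inf_top_eq]
      have h2 : h.toSubmodule ⊓ m ⊔ J = h.toSubmodule ⊓ (m ⊔ J) :=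
        inf_sup_assoc_of_le _ hJh
      have h3 : h.toSubmodule ⊓ m = ⊥ := disjoint_iff.mp hcompl.disjoint
      rw [h1, ← h2, h3, bot_sup_eq]
    refine ⟨?_, fun x hx y hy => hmh x hx y hy, ?_⟩
    · intro x hx y hy
      rw [hDproj]
      exact hT x hx y hy
    · -- irreducibility
      intro p hpm hpinvh
      by_contra hcon
      push_neg at hcon
      obtain ⟨hpbot, hpne⟩ := hcon
      have hpinv : ∀ u ∈ h.toSubmodule, ∀ w ∈ p, ⁅u, w⁆ ∈ p := fun u hu w hw =>
        hpinvh u hu w hw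
      set q : Submodule ℝ g := m ⊓ B.orthogonal p with hq
      have hqm : q ≤ m := inf_le_left
      have horthpq : ∀ x ∈ p, ∀ y ∈ q, B x y = 0 := by
        intro x hx y hy
        exact (LinearMap.BilinForm.mem_orthogonal_iff.mp hy.2) x hx
      have hsupq : p ⊔ q = m := supOrth p hpm
      have hqbot : q ≠ ⊥ := by
        intro hbot
        rw [hbot, sup_bot_eq] at hsupq
        exact hpne hsupq
      have hpq0 : ∀ x ∈ p, ∀ y ∈ q, ⁅x, y⁆ = (0 : g) := by
        intro x hx y hy
        have hvh : ⁅x, y⁆ ∈ h.toSubmodule := hmh x (hpm hx) y (hqm hy)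
        have step1 : ∀ z ∈ m, ⁅⁅x, y⁆, z⁆ = (0 : g) := by
          intro z hz
          have hwm : ⁅⁅x, y⁆, z⁆ ∈ m := hlie_hm _ hvh z hz
          apply hzero
          have ht := hwm
          calc B ⁅⁅x, y⁆, z⁆ ⁅⁅x, y⁆, z⁆
              = B ⁅x, y⁆ ⁅z, ⁅⁅x, y⁆, z⁆⁆ := hinv _ _ _
            _ = - B y ⁅x, ⁅z, ⁅⁅x, y⁆, z⁆⁆⁆ := hinv' _ _ _
            _ = 0 := by
                have hu : ⁅z, ⁅⁅x, y⁆, z⁆⁆ ∈ h.toSubmodule := hmh z hz _ hwm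
                rw [(lie_skew x ⁅z, ⁅⁅x, y⁆, z⁆⁆).symm, map_neg]
                have hp1 : ⁅⁅z, ⁅⁅x, y⁆, z⁆⁆, x⁆ ∈ p := hpinv _ hu x hx
                have : B y ⁅⁅z, ⁅⁅x, y⁆, z⁆⁆, x⁆ = 0 := by
                  rw [hsymm]
                  exact horthpq _ hp1 y hy
                rw [this]; simp
        have step3 : ∀ u ∈ h.toSubmodule, ⁅⁅x, y⁆, u⁆ = (0 : g) := by
          intro u hu
          rw [hspan] at hu
          induction hu using Submodule.span_induction with
          | mem t ht =>
            obtain ⟨a', ha', b', hb', rfl⟩ := ht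
            rw [leibniz_lie, step1 a' ha', zero_lie, step1 b' hb', lie_zero, add_zero]
          | zero => exact lie_zero _
          | add u v hu hv hu' hv' => rw [lie_add, hu', hv', add_zero]
          | smul r u hu hu' => rw [lie_smul, hu', smul_zero]
        have hv0 : ∀ w : g, ⁅⁅x, y⁆, w⁆ = (0 : g) := by
          intro w
          have hw : w = (w - P w) + P w := by abel
          rw [hw, lie_add, step3 _ (hPh w), step1 _ (hPmem w), add_zero]
        set Iv : LieIdeal ℝ g :=
          { toSubmodule := Submodule.span ℝ {⁅x, y⁆},
            lie_mem := by
              intro z t ht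
              have ht' : t ∈ Submodule.span ℝ {⁅x, y⁆} := ht
              show ⁅z, t⁆ ∈ Submodule.span ℝ {⁅x, y⁆}
              rw [Submodule.mem_span_singleton] at ht' ⊢
              obtain ⟨r, rfl⟩ := ht'
              refine ⟨0, ?_⟩
              rw [lie_smul, (lie_skew z ⁅x, y⁆).symm, hv0 z, neg_zero, smul_zero, zero_smul] }
          with hIv
        rcases hsimple.eq_bot_or_eq_top Iv with hb | htp
        · have : ⁅x, y⁆ ∈ Iv := Submodule.mem_span_singleton_self _
          rw [hb] at this
          exact (LieSubmodule.mem_bot _).mp this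
        · exfalso
          apply hsimple.non_abelian
          constructor
          intro a' b'
          have ha' : a' ∈ Iv := by rw [htp]; exact LieSubmodule.mem_top _
          have ha2 : a' ∈ Submodule.span ℝ {⁅x, y⁆} := ha'
          rw [Submodule.mem_span_singleton] at ha2
          obtain ⟨r, hr⟩ := ha2
          rw [← hr, smul_lie, hv0 b', smul_zero]
      exact lemD p q hpm hqm hsupq horthpq hpq0
        (fun x hx y hy => by rw [hT x (hpm hx) y (hpm hy)]; exact p.zero_mem) hpbot hqbot
  · -- torsion non-zero case
    left
    push_neg at hT
    obtain ⟨x₀, hx₀, y₀, hy₀, hne⟩ := hT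
    constructor
    · exact ⟨x₀, hx₀, y₀, hy₀, by rw [hDproj]; exact hne⟩
    intro hRed
    obtain ⟨p₁, p₂, hp₁m', hp₂m', hp₁b, hp₂b, hsup12', horth12, hvan⟩ := hRed
    have hp₁m : p₁ ≤ m := hp₁m'
    have hp₂m : p₂ ≤ m := hp₂m'
    have hsup12 : p₁ ⊔ p₂ = m := hsup12'
    have hT3 : ∀ x y z : g, D.T3 x y z = - B (P ⁅x, y⁆) z := by
      intro x y z
      show D.met (-(D.projm ⁅x, y⁆)) z = - B (P ⁅x, y⁆) z
      rw [hDmet, hDproj, map_neg]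
      simp
    have hdisj : ∀ t : g, t ∈ p₁ → t ∈ p₂ → t = 0 := fun t h1 h2 =>
      hzero t (horth12 t h1 t h2)
    -- mixed torsion vanishes
    have s1 : ∀ x ∈ p₁, ∀ y ∈ p₂, P ⁅x, y⁆ = (0 : g) := by
      intro x hx y hy
      by_cases hx0 : x = 0
      · simp [hx0]
      by_cases hy0 : y = 0
      · simp [hy0]
      have hside : ¬((x ∈ p₁ ∧ y ∈ p₁ ∧ True) ∨ (x ∈ p₂ ∧ y ∈ p₂ ∧ True)) := by
        rintro (⟨_, hyp₁, _⟩ | ⟨hxp₂, _, _⟩)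
        · exact hy0 (hdisj y hyp₁ hy)
        · exact hx0 (hdisj x hx hxp₂)
      have hall : ∀ z ∈ m, B (P ⁅x, y⁆) z = 0 := by
        intro z hz
        obtain ⟨z₁, hz₁, z₂, hz₂, hzz⟩ := Submodule.mem_sup.mp (by rw [hsup12]; exact hz)
        have hv1 : B (P ⁅x, y⁆) z₁ = 0 := by
          have hside1 : ¬((x ∈ p₁ ∧ y ∈ p₁ ∧ z₁ ∈ p₁) ∨ (x ∈ p₂ ∧ y ∈ p₂ ∧ z₁ ∈ p₂)) := by
            rintro (⟨_, hyp₁, _⟩ | ⟨hxp₂, _, _⟩)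
            · exact hy0 (hdisj y hyp₁ hy)
            · exact hx0 (hdisj x hx hxp₂)
          have := hvan x y z₁ (Or.inl hx) (Or.inr hy) (Or.inl hz₁) hside1
          rw [hT3] at this
          linarith
        have hv2 : B (P ⁅x, y⁆) z₂ = 0 := by
          have hside2 : ¬((x ∈ p₁ ∧ y ∈ p₁ ∧ z₂ ∈ p₁) ∨ (x ∈ p₂ ∧ y ∈ p₂ ∧ z₂ ∈ p₂)) := by
            rintro (⟨_, hyp₁, _⟩ | ⟨hxp₂, _, _⟩)
            · exact hy0 (hdisj y hyp₁ hy)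
            · exact hx0 (hdisj x hx hxp₂)
          have := hvan x y z₂ (Or.inl hx) (Or.inr hy) (Or.inr hz₂) hside2
          rw [hT3] at this
          linarith
        rw [← hzz, map_add, hv1, hv2, add_zero]
      exact hzero _ (hall _ (hPmem _))
    have s1' : ∀ x ∈ p₂, ∀ y ∈ p₁, P ⁅x, y⁆ = (0 : g) := by
      intro x hx y hy
      rw [(lie_skew x y).symm, map_neg, s1 y hy x hx, neg_zero]
    -- torsion of each block stays in the block
    have s2 : ∀ x ∈ p₁, ∀ y ∈ p₁, P ⁅x, y⁆ ∈ p₁ := by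
      intro x hx y hy
      apply memP p₁ p₂ hsup12 horth12 _ (hPmem _)
      intro z hz
      by_cases hx0 : x = 0
      · simp [hx0]
      by_cases hy0 : y = 0
      · simp [hy0]
      by_cases hz0 : z = 0
      · simp [hz0]
      have hside : ¬((x ∈ p₁ ∧ y ∈ p₁ ∧ z ∈ p₁) ∨ (x ∈ p₂ ∧ y ∈ p₂ ∧ z ∈ p₂)) := by
        rintro (⟨_, _, hzp₁⟩ | ⟨hxp₂, _, _⟩)
        · exact hz0 (hdisj z hzp₁ hz)
        · exact hx0 (hdisj x hx hxp₂)
      have := hvan x y z (Or.inl hx) (Or.inl hy) (Or.inr hz) hside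
      rw [hT3] at this
      linarith
    have s2' : ∀ x ∈ p₂, ∀ y ∈ p₂, P ⁅x, y⁆ ∈ p₂ := by
      intro x hx y hy
      apply memP p₂ p₁ (by rw [sup_comm]; exact hsup12)
        (fun u hu v hv => by rw [hsymm]; exact horth12 v hv u hu) _ (hPmem _)
      intro z hz
      by_cases hx0 : x = 0
      · simp [hx0]
      by_cases hy0 : y = 0
      · simp [hy0]
      by_cases hz0 : z = 0
      · simp [hz0]
      have hside : ¬((x ∈ p₁ ∧ y ∈ p₁ ∧ z ∈ p₁) ∨ (x ∈ p₂ ∧ y ∈ p₂ ∧ z ∈ p₂)) := by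
        rintro (⟨hxp₁, _, _⟩ | ⟨_, _, hzp₂⟩)
        · exact hx0 (hdisj x hxp₁ hx)
        · exact hz0 (hdisj z hz hzp₂)
      have := hvan x y z (Or.inr hx) (Or.inr hy) (Or.inl hz) hside
      rw [hT3] at this
      linarith
    -- the main contradiction engine
    have mainB : ∀ p q : Submodule ℝ g, p ≤ m → q ≤ m → p ⊔ q = m →
        (∀ x ∈ p, ∀ y ∈ q, B x y = 0) →
        (∀ x ∈ p, ∀ y ∈ q, P ⁅x, y⁆ = (0 : g)) →
        (∀ x ∈ p, ∀ y ∈ p, P ⁅x, y⁆ ∈ p) →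
        q ≠ ⊥ → (∃ a ∈ p, ∃ b ∈ p, P ⁅a, b⁆ ≠ 0) → False := by
      intro p q hpm hqm hsup horth hmix hclos hqbot hex
      obtain ⟨a₀, ha₀, b₀, hb₀, hne0⟩ := hex
      set W : Submodule ℝ g := Submodule.span ℝ {v | ∃ a ∈ p, ∃ b ∈ p, v = P ⁅a, b⁆}
        with hWdef
      have hWb : W ≠ ⊥ := by
        intro hb
        apply hne0
        have : P ⁅a₀, b₀⁆ ∈ W := Submodule.subset_span ⟨a₀, ha₀, b₀, hb₀, rfl⟩
        rw [hb] at this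
        exact this
      have hmix0 : ∀ x ∈ p, ∀ y ∈ m, (∀ s ∈ p, B s y = 0) → P ⁅x, y⁆ = (0 : g) := by
        intro x hx y hym hyo
        have hyq : y ∈ q := memP q p (by rw [sup_comm]; exact hsup)
          (fun u hu v hv => by rw [hsymm]; exact horth v hv u hu) y hym
          (fun s hs => by rw [hsymm]; exact hyo s hs)
        exact hmix x hx y hyq
      have chain : ∀ n : ℕ, ∀ C : Submodule ℝ g, C ≤ p →
          (∀ x ∈ C, ∀ y ∈ C, P ⁅x, y⁆ ∈ C) →
          (∀ x ∈ C, ∀ y ∈ m, (∀ s ∈ C, B s y = 0) → P ⁅x, y⁆ = (0 : g)) →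
          W ≤ C →
          (∀ w ∈ W, ∀ y ∈ m, (∀ s ∈ C, B s y = 0) → ⁅w, y⁆ = (0 : g)) →
          (W = Submodule.span ℝ {v | ∃ a ∈ C, ∃ b ∈ C, v = P ⁅a, b⁆}) →
          Module.finrank ℝ C ≤ n → False := by
        intro n
        induction n with
        | zero =>
          intro C _ _ _ hWC _ _ hrank
          have hC0 : C = ⊥ := Submodule.finrank_eq_zero.mp (Nat.le_zero.mp hrank)
          rw [hC0] at hWC
          exact hWb (le_bot_iff.mp hWC)
        | succ n ih =>
          intro C hCp hclosC hmixC hWC hWann hWspan hrank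
          set qC : Submodule ℝ g := m ⊓ B.orthogonal C with hqCdef
          have hqCm : ∀ y ∈ qC, y ∈ m := fun y hy => hy.1
          have hqCorth : ∀ y ∈ qC, ∀ s ∈ C, B s y = 0 := fun y hy s hs =>
            (LinearMap.BilinForm.mem_orthogonal_iff.mp hy.2) s hs
          have hCm : C ≤ m := le_trans hCp hpm
          have hsupC : C ⊔ qC = m := supOrth C hCm
          by_cases hstab : ∀ x ∈ C, ∀ y ∈ qC, ⁅x, y⁆ = (0 : g)
          · -- stabilized : contradiction with simplicity via lemD
            have hqle : q ≤ qC := by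
              intro y hy
              refine Submodule.mem_inf.mpr ⟨hqm hy, ?_⟩
              rw [LinearMap.BilinForm.mem_orthogonal_iff]
              intro s hs
              exact horth s (hCp hs) y hy
            have hqCbot : qC ≠ ⊥ := by
              intro hb
              rw [hb] at hqle
              exact hqbot (le_bot_iff.mp hqle)
            have hCbot : C ≠ ⊥ := by
              intro hb
              rw [hb] at hWC
              exact hWb (le_bot_iff.mp hWC)
            exact lemD C qC hCm inf_le_left hsupC
              (fun x hx y hy => hqCorth y hy x hx) hstab hclosC hCbot hqCbot
          · -- strict descent
            push_neg at hstab
            obtain ⟨x', hx', y', hy', hne'⟩ := hstab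
            set C' : Submodule ℝ g := C ⊓ lieAnn qC with hC'def
            have hC'le : C' ≤ C := inf_le_left
            have hannC' : ∀ w ∈ C', ∀ y ∈ qC, ⁅w, y⁆ = (0 : g) := fun w hw y hy =>
              hw.2 y hy
            have hC'ne : C' ≠ C := by
              intro he
              apply hne'
              have : x' ∈ C' := by rw [he]; exact hx'
              exact hannC' x' this y' hy'
            have hlt : C' < C := lt_of_le_of_ne hC'le hC'ne
            have hrank' : Module.finrank ℝ C' ≤ n := by
              have h1 := Submodule.finrank_lt_finrank_of_lt hlt
              omega
            -- torsion of C lands in C'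
            have hPC' : ∀ a ∈ C, ∀ b ∈ C, P ⁅a, b⁆ ∈ C' := by
              intro a ha b hb
              refine Submodule.mem_inf.mpr ⟨hclosC a ha b hb, ?_⟩
              intro y hy
              exact JL C hCm hclosC hmixC a ha b hb y (hqCm y hy)
                (fun s hs => hqCorth y hy s hs)
            set S : Submodule ℝ g := C ⊓ B.orthogonal C' with hSdef
            have hSorth : ∀ s ∈ S, ∀ w ∈ C', B w s = 0 := fun s hs w hw =>
              (LinearMap.BilinForm.mem_orthogonal_iff.mp hs.2) w hw
            have SL2 : ∀ a ∈ C, ∀ s ∈ S, P ⁅a, s⁆ = (0 : g) := by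
              intro a ha s hs
              have hv1 : P ⁅a, s⁆ ∈ C' := hPC' a ha s hs.1
              apply hzero
              have horthC' : ∀ w' ∈ C', B (P ⁅a, s⁆) w' = 0 := by
                intro w' hw'
                rw [hBP _ w' (hCm (hC'le hw')), hinv' a s w']
                have hdec : ⁅a, w'⁆ = (⁅a, w'⁆ - P ⁅a, w'⁆) + P ⁅a, w'⁆ := by abel
                rw [hdec, map_add]
                have e1 : B s (⁅a, w'⁆ - P ⁅a, w'⁆) = 0 :=
                  horthmh s (hCm hs.1) _ (hPh _)
                have e2 : B s (P ⁅a, w'⁆) = 0 := by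
                  rw [hsymm]
                  exact hSorth s hs _ (hPC' a ha w' (hC'le hw'))
                rw [e1, e2]
                ring
              exact horthC' _ hv1
            have SLg : ∀ w₁ ∈ C', ∀ w₂ ∈ C', ∀ s ∈ S, ⁅P ⁅w₁, w₂⁆, s⁆ = (0 : g) := by
              intro w₁ hw₁ w₂ hw₂ s hs
              have hSm : s ∈ m := hCm hs.1
              have h1 : ⁅w₂, s⁆ ∈ h.toSubmodule := hPmemH _ (SL2 w₂ (hC'le hw₂) s hs)
              have h2 : ⁅w₁, s⁆ ∈ h.toSubmodule := hPmemH _ (SL2 w₁ (hC'le hw₁) s hs)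
              have h3 : ⁅P ⁅w₁, w₂⁆, s⁆ ∈ h.toSubmodule := by
                apply hPmemH
                exact SL2 _ (hC'le (hPC' w₁ (hC'le hw₁) w₂ (hC'le hw₂))) s hs
              have hm1 : ⁅w₁, ⁅w₂, s⁆⁆ ∈ m := lemMH _ h1 w₁ (hCm (hC'le hw₁))
              have hm2 : ⁅w₂, ⁅w₁, s⁆⁆ ∈ m := lemMH _ h2 w₂ (hCm (hC'le hw₂))
              have hm3 : ⁅⁅w₁, w₂⁆ - P ⁅w₁, w₂⁆, s⁆ ∈ m := hlie_hm _ (hPh _) s hSm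
              have key : ⁅P ⁅w₁, w₂⁆, s⁆
                  = ⁅w₁, ⁅w₂, s⁆⁆ - ⁅w₂, ⁅w₁, s⁆⁆ - ⁅⁅w₁, w₂⁆ - P ⁅w₁, w₂⁆, s⁆ := by
                rw [sub_lie, lie_lie]; abel
              exact hinm _ h3 (key ▸ Submodule.sub_mem _ (Submodule.sub_mem _ hm1 hm2) hm3)
            have hsupC' : C' ⊔ S = C := by
              have hco : IsCompl C' (B.orthogonal C') :=
                LinearMap.BilinForm.isCompl_orthogonal_of_restrict_nondegenerate hrefl
                  (hnd C')
              have h1 : C' ⊔ (B.orthogonal C' ⊓ C) = (C' ⊔ B.orthogonal C') ⊓ C :=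
                (sup_inf_assoc_of_le _ hC'le).symm
              rw [hSdef, inf_comm C (B.orthogonal C'), h1, hco.sup_eq_top, top_inf_eq]
            have TP : ∀ a ∈ C, ∀ b ∈ C, ∃ a' ∈ C', ∃ b' ∈ C', P ⁅a, b⁆ = P ⁅a', b'⁆ := by
              intro a ha b hb
              obtain ⟨a', ha', sa, hsa, haa⟩ := Submodule.mem_sup.mp
                (by rw [hsupC']; exact ha)
              obtain ⟨b', hb', sb, hsb, hbb⟩ := Submodule.mem_sup.mp
                (by rw [hsupC']; exact hb)
              refine ⟨a', ha', b', hb', ?_⟩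
              have e1 : P ⁅a', sb⁆ = 0 := SL2 a' (hC'le ha') sb hsb
              have e2 : P ⁅sa, b'⁆ = 0 := by
                rw [(lie_skew sa b').symm, map_neg, SL2 b' (hC'le hb') sa hsa, neg_zero]
              have e3 : P ⁅sa, sb⁆ = 0 := SL2 sa hsa.1 sb hsb
              have hsplit : ⁅a' + sa, b' + sb⁆
                  = ⁅a', b'⁆ + ⁅a', sb⁆ + ⁅sa, b'⁆ + ⁅sa, sb⁆ := by
                rw [add_lie, lie_add, lie_add]; abel
              rw [← haa, ← hbb, hsplit, map_add, map_add, map_add, e1, e2, e3]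
              abel
            have hWspan' : W = Submodule.span ℝ {v | ∃ a ∈ C', ∃ b ∈ C', v = P ⁅a, b⁆} := by
              apply le_antisymm
              · rw [hWspan, Submodule.span_le]
                rintro v ⟨a, ha, b, hb, rfl⟩
                obtain ⟨a', ha', b', hb', he⟩ := TP a ha b hb
                rw [he]
                exact Submodule.subset_span ⟨a', ha', b', hb', rfl⟩
              · rw [hWspan, Submodule.span_le]
                rintro v ⟨a, ha, b, hb, rfl⟩
                exact Submodule.subset_span ⟨a, hC'le ha, b, hC'le hb, rfl⟩
            have hWC' : W ≤ C' := by
              rw [hWspan', Submodule.span_le]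
              rintro v ⟨a, ha, b, hb, rfl⟩
              exact hPC' a (hC'le ha) b (hC'le hb)
            have hdecomp : ∀ y ∈ m, (∀ s' ∈ C', B s' y = 0) →
                ∃ yC ∈ S, ∃ yq ∈ qC, yC + yq = y := by
              intro y hym hyo
              obtain ⟨yC, hyC, yq, hyq, hyy⟩ := Submodule.mem_sup.mp
                (by rw [hsupC]; exact hym)
              refine ⟨yC, ?_, yq, hyq, hyy⟩
              refine Submodule.mem_inf.mpr ⟨hyC, ?_⟩
              rw [LinearMap.BilinForm.mem_orthogonal_iff]
              intro n' hn'
              have e1 : B n' y = 0 := hyo n' hn'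
              have e2 : B n' yq = 0 := hqCorth yq hyq n' (hC'le hn')
              have e3 : B n' y = B n' yC + B n' yq := by rw [← hyy, map_add]
              rw [e1, e2, add_zero] at e3
              exact e3.symm
            have hmixC' : ∀ x ∈ C', ∀ y ∈ m, (∀ s' ∈ C', B s' y = 0) →
                P ⁅x, y⁆ = (0 : g) := by
              intro x hx y hym hyo
              obtain ⟨yC, hyCS, yq, hyq, hyy⟩ := hdecomp y hym hyo
              have e1 : ⁅x, yq⁆ = 0 := hannC' x hx yq hyq
              have e2 : P ⁅x, yC⁆ = 0 := SL2 x (hC'le hx) yC hyCS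
              rw [← hyy, lie_add, map_add, e1, e2, map_zero, add_zero]
            have hWann' : ∀ w ∈ W, ∀ y ∈ m, (∀ s' ∈ C', B s' y = 0) →
                ⁅w, y⁆ = (0 : g) := by
              intro w hw y hym hyo
              obtain ⟨yC, hyCS, yq, hyq, hyy⟩ := hdecomp y hym hyo
              have e1 : ⁅w, yq⁆ = 0 := hWann w hw yq (hqCm yq hyq)
                (fun s hs => hqCorth yq hyq s hs)
              have e2 : ∀ w' ∈ W, ⁅w', yC⁆ = (0 : g) := by
                intro w' hw'
                rw [hWspan'] at hw'
                induction hw' using Submodule.span_induction with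
                | mem v hv =>
                  obtain ⟨a, ha, b, hb, rfl⟩ := hv
                  exact SLg a ha b hb yC hyCS
                | zero => exact zero_lie _
                | add u v hu hv hu' hv' => rw [add_lie, hu', hv', add_zero]
                | smul r u hu hu' => rw [smul_lie, hu', smul_zero]
              rw [← hyy, lie_add, e1, e2 w hw, zero_add]
            exact ih C' (le_trans hC'le hCp)
              (fun x hx y hy => hPC' x (hC'le hx) y (hC'le hy))
              hmixC' hWC' hWann' hWspan' hrank'
      -- initial invariants
      have hWle0 : W ≤ p := by
        rw [hWdef, Submodule.span_le]
        rintro v ⟨a, ha, b, hb, rfl⟩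
        exact hclos a ha b hb
      have hWann0 : ∀ w ∈ W, ∀ y ∈ m, (∀ s ∈ p, B s y = 0) → ⁅w, y⁆ = (0 : g) := by
        intro w hw y hym hyo
        induction hw using Submodule.span_induction with
        | mem v hv =>
          obtain ⟨a, ha, b, hb, rfl⟩ := hv
          exact JL p hpm hclos hmix0 a ha b hb y hym hyo
        | zero => exact zero_lie _
        | add u v hu hv hu' hv' => rw [add_lie, hu', hv', add_zero]
        | smul r u hu hu' => rw [smul_lie, hu', smul_zero]
      exact chain (Module.finrank ℝ p) p le_rfl hclos hmix0 hWle0 hWann0 hWdef le_rfl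
    -- apply the engine to the decomposition of the non-zero torsion
    obtain ⟨x₁, hx₁, x₂, hx₂, hxx⟩ := Submodule.mem_sup.mp (by rw [hsup12]; exact hx₀)
    obtain ⟨y₁, hy₁, y₂, hy₂, hyy⟩ := Submodule.mem_sup.mp (by rw [hsup12]; exact hy₀)
    have hdec : P ⁅x₀, y₀⁆ = P ⁅x₁, y₁⁆ + P ⁅x₂, y₂⁆ := by
      have hsplit : ⁅x₁ + x₂, y₁ + y₂⁆
          = ⁅x₁, y₁⁆ + ⁅x₁, y₂⁆ + ⁅x₂, y₁⁆ + ⁅x₂, y₂⁆ := by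
        rw [add_lie, lie_add, lie_add]; abel
      rw [← hxx, ← hyy, hsplit, map_add, map_add, map_add,
        s1 x₁ hx₁ y₂ hy₂, s1' x₂ hx₂ y₁ hy₁]
      abel
    by_cases hc1 : P ⁅x₁, y₁⁆ = 0
    · have hc2 : P ⁅x₂, y₂⁆ ≠ 0 := by
        intro h0
        apply hne
        rw [hdec, hc1, h0, add_zero]
      exact mainB p₂ p₁ hp₂m hp₁m (by rw [sup_comm]; exact hsup12)
        (fun u hu v hv => by rw [hsymm]; exact horth12 v hv u hu)
        s1' s2' hp₁b ⟨x₂, hx₂, y₂, hy₂, hc2⟩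
    · exact mainB p₁ p₂ hp₁m hp₂m hsup12 horth12 s1 s2 hp₂b ⟨x₁, hx₁, y₁, hy₁, hc1⟩
end
end

section
/- Let (g = h ⊕ m, g) be a naturally reductive decomposition with g a finite-dimensional real semisimple Lie algebra, and suppose there is an ad(g)-invariant non-degenerate symmetric bilinear form ḡ on g with ḡ(h, m) = 0 and ḡ|_{m×m} = g. If [m, m]_h = h, then the map ad: h → so(m), h ↦ [h, ·]|_m, is injective; consequently g is the transvection algebra of the decomposition. -/
noncomputable section

/-- Let `g = h ⊕ m` be a naturally reductive decomposition with `g`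
semisimple, `ḡ` an `ad`-invariant non-degenerate symmetric bilinear form with
`ḡ(h,m) = 0` and `ḡ|_{m×m} = g`.  If `[m,m]_h = h` then `ad : h → so(m)` is
injective; consequently `g` is the transvection algebra of the decomposition. -/
theorem statement5 {g : Type*} [LieRing g] [LieAlgebra ℝ g] [FiniteDimensional ℝ g]
    (hss : LieAlgebra.IsSemisimple ℝ g)
    (D : NatRed g)
    (gb : LinearMap.BilinForm ℝ g)
    (hsymm : ∀ x y : g, gb x y = gb y x)
    (hinv : ∀ x y z : g, gb ⁅x, y⁆ z + gb y ⁅x, z⁆ = 0)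
    (hnd : ∀ x : g, (∀ y : g, gb x y = 0) → x = 0)
    (hrestr : ∀ x ∈ D.m, ∀ y ∈ D.m, gb x y = D.met x y)
    (hperp : ∀ x ∈ D.h, ∀ y ∈ D.m, gb x y = 0)
    (hspan : D.h.toSubmodule
      = Submodule.span ℝ {z : g | ∃ x ∈ D.m, ∃ y ∈ D.m, z = D.projh ⁅x, y⁆}) :
    D.Effective ∧ D.IsTransvection := by
  have heff : D.Effective := by
    intro x hx hbr
    apply hnd
    -- gb x vanishes on m
    have hm : ∀ y ∈ D.m, gb x y = 0 := fun y hy => hperp x hx y hy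
    -- gb x vanishes on h
    have hh : ∀ y ∈ D.h.toSubmodule, gb x y = 0 := by
      rw [hspan]
      intro y hy
      induction hy using Submodule.span_induction with
      | mem z hz =>
        obtain ⟨u, hu, v, hv, rfl⟩ := hz
        have h1 : gb x ⁅u, v⁆ = 0 := by
          have := hinv u x v
          have hux : ⁅u, x⁆ = (0 : g) := by
            rw [← lie_skew, hbr u hu, neg_zero]
          rw [hux] at this
          simpa using this
        have hdecomp : (D.projh ⁅u, v⁆ : g) + D.projm ⁅u, v⁆ = ⁅u, v⁆ := by
          exact
            Submodule.projection_add_projection_eq_self D.compl ⁅u, v⁆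
        have h2 : gb x (D.projm ⁅u, v⁆) = 0 :=
          hm _ (projOnto_mem _ _ _ _)
        have := h1
        rw [← hdecomp, map_add] at this
        linarith
      | zero => simp
      | add a b _ _ ha hb => rw [map_add]; rw [ha, hb]; ring
      | smul c a _ ha => rw [map_smul, ha]; simp
    intro y
    obtain ⟨u, hu, v, hv, huv⟩ : ∃ u ∈ D.h.toSubmodule, ∃ v ∈ D.m, u + v = y := by
      have : y ∈ D.h.toSubmodule ⊔ D.m := by
        rw [D.compl.sup_eq_top]; trivial
      obtain ⟨u, hu, v, hv, h⟩ := Submodule.mem_sup.mp this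
      exact ⟨u, hu, v, hv, h⟩
    rw [← huv, map_add, hh u hu, hm v hv, add_zero]
  exact ⟨heff, heff, hspan⟩
end
end

section
/- Let (g = h ⊕ m, g) be an effective naturally reductive decomposition with g a finite-dimensional real semisimple Lie algebra, and suppose there is an ad(g)-invariant non-degenerate symmetric bilinear form ḡ on g with ḡ(h, m) = 0 and ḡ|_{m×m} = g. Then [m, m]_h = h, and g is the transvection algebra of the decomposition. -/
noncomputable section

/-- Let `g = h ⊕ m` be an effective naturally reductive
decomposition with `g` semisimple, `ḡ` an `ad`-invariant non-degenerate symmetric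
bilinear form with `ḡ(h,m) = 0` and `ḡ|_{m×m} = g`.  Then `[m,m]_h = h` and `g` is
the transvection algebra of the decomposition. -/
theorem statement7 {g : Type*} [LieRing g] [LieAlgebra ℝ g] [FiniteDimensional ℝ g]
    (hss : LieAlgebra.IsSemisimple ℝ g)
    (D : NatRed g) (hEff : D.Effective)
    (gb : LinearMap.BilinForm ℝ g)
    (hsymm : ∀ x y : g, gb x y = gb y x)
    (hinv : ∀ x y z : g, gb ⁅x, y⁆ z + gb y ⁅x, z⁆ = 0)
    (hnd : ∀ x : g, (∀ y : g, gb x y = 0) → x = 0)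
    (hrestr : ∀ x ∈ D.m, ∀ y ∈ D.m, gb x y = D.met x y)
    (hperp : ∀ x ∈ D.h, ∀ y ∈ D.m, gb x y = 0) :
    D.h.toSubmodule
      = Submodule.span ℝ {z : g | ∃ x ∈ D.m, ∃ y ∈ D.m, z = D.projh ⁅x, y⁆} ∧
    D.IsTransvection := by
  classical
  set S : Submodule ℝ g :=
    Submodule.span ℝ {z : g | ∃ x ∈ D.m, ∃ y ∈ D.m, z = D.projh ⁅x, y⁆} with hS
  have hSle : S ≤ D.h.toSubmodule := by
    rw [hS, Submodule.span_le]
    rintro z ⟨x, hx, y, hy, rfl⟩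
    exact projOnto_mem _ _ _ _
  have hdecomp : ∀ z : g, D.projh z + D.projm z = z := fun z =>
    Submodule.projection_add_projection_eq_self D.compl z
  have hndB : gb.Nondegenerate := ⟨hnd, fun y h => hnd y fun x => by rw [hsymm]; exact h x⟩
  have hrefl : gb.IsRefl := fun x y h => by rw [hsymm]; exact h
  set O : Submodule ℝ g := gb.orthogonal S with hO
  have hmO : D.m ≤ O := by
    intro y hy
    rw [hO, LinearMap.BilinForm.mem_orthogonal_iff]
    intro n hn
    induction hn using Submodule.span_induction with
    | mem z hz =>
      obtain ⟨x', hx', y', hy', rfl⟩ := hz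
      exact hperp _ (projOnto_mem _ _ _ _) _ hy
    | zero => simp
    | add a b _ _ ha hb => rw [map_add, LinearMap.add_apply, ha, hb, add_zero]
    | smul c a _ ha => rw [map_smul, LinearMap.smul_apply, ha, smul_zero]
  have hdisj : D.h.toSubmodule ⊓ O = ⊥ := by
    rw [Submodule.eq_bot_iff]
    rintro a ⟨hah, haO⟩
    apply hEff a hah
    intro x hx
    have key : ∀ y' ∈ D.m, gb ⁅a, x⁆ y' = 0 := by
      intro y' hy'
      have h1 : gb a ⁅x, y'⁆ = 0 := by
        have hd := hdecomp ⁅x, y'⁆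
        have hgen : D.projh ⁅x, y'⁆ ∈ S := Submodule.subset_span ⟨x, hx, y', hy', rfl⟩
        have hpm : D.projm ⁅x, y'⁆ ∈ D.m := projOnto_mem _ _ _ _
        calc gb a ⁅x, y'⁆ = gb a (D.projh ⁅x, y'⁆) + gb a (D.projm ⁅x, y'⁆) := by
              rw [← LinearMap.map_add, hd]
          _ = 0 := by
              rw [hsymm a (D.projh ⁅x, y'⁆), haO _ hgen, hperp a hah _ hpm, add_zero]
      have h2 := hinv x a y'
      have h3 : (⁅x, a⁆ : g) = -⁅a, x⁆ := (lie_skew x a).symm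
      rw [h1, add_zero, h3, map_neg, LinearMap.neg_apply, neg_eq_zero] at h2
      exact h2
    have hax : (⁅a, x⁆ : g) ∈ D.m := D.lie_hm a hah x hx
    by_contra hne
    have hpos := D.met_posdef _ hax hne
    rw [← hrestr _ hax _ hax, key _ hax] at hpos
    exact lt_irrefl 0 hpos
  have hfin1 : Module.finrank ℝ O = Module.finrank ℝ g - Module.finrank ℝ S :=
    LinearMap.BilinForm.finrank_orthogonal hndB S
  have hfin2 : Module.finrank ℝ D.h.toSubmodule + Module.finrank ℝ D.m
      = Module.finrank ℝ g := Submodule.finrank_add_eq_of_isCompl D.compl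
  have hfin3 : Module.finrank ℝ D.m ≤ Module.finrank ℝ O :=
    Submodule.finrank_mono hmO
  have hfin4 : Module.finrank ℝ D.h.toSubmodule + Module.finrank ℝ O
      ≤ Module.finrank ℝ g := by
    have := Submodule.finrank_sup_add_finrank_inf_eq D.h.toSubmodule O
    rw [hdisj, finrank_bot] at this
    have hle : Module.finrank ℝ ↥(D.h.toSubmodule ⊔ O) ≤ Module.finrank ℝ g :=
      Submodule.finrank_le _
    omega
  have hfinS : Module.finrank ℝ S ≤ Module.finrank ℝ g := Submodule.finrank_le _
  have heq : D.h.toSubmodule = S := by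
    refine (Submodule.eq_of_le_of_finrank_le hSle ?_).symm
    omega
  exact ⟨heq, hEff, heq⟩
end
end

section
/- Let (g = h ⊕ m, g) be an effective irreducible naturally reductive decomposition with an abelian ideal a ⊆ g and fiber decomposition g = h⁺ ⊕ h⁻ ⊕ m⁺ ⊕ m⁻ (so a ∩ m = a ∩ h = 0 and g = h ⊕ a ⊕ m⁻ as vector spaces). Let π'_h: g → h be the projection along a ⊕ m⁻, set h₀ := π'_h([m⁻, m⁻]) (an ideal of h), and let h₀^⊥ be a complementary ideal of h₀ in h. Then a ⊕ h₀ ⊕ m⁻ is a Lie subalgebra of g, g is the semidirect sum g ≅ h₀^⊥ ⋉ (a ⊕ h₀ ⊕ m⁻), a is contained in the center of a ⊕ h₀ ⊕ m⁻, and the quotient g⁻ := (a ⊕ h₀ ⊕ m⁻)/a, identified as a vector space with h₀ ⊕ m⁻ and with the induced bracket, is a naturally reductive decomposition (isotropy algebra h₀, metric g|_{m⁻×m⁻}) of the base space associated to a, with g⁻ its transvection algebra. -/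
noncomputable section

section Aux
variable {g : Type*} [AddCommGroup g] [Module ℝ g] {p q : Submodule ℝ g} (hc : IsCompl p q)

lemma projOnto_eq_self_of_mem {x : g} (hx : x ∈ p) : projOnto p q hc x = x := by
  have := Submodule.linearProjOfIsCompl_apply_left hc ⟨x, hx⟩
  simp only [projOnto, LinearMap.coe_comp, Function.comp_apply, Submodule.coe_subtype]
  exact congrArg Subtype.val this

lemma projOnto_eq_zero_of_mem {x : g} (hx : x ∈ q) : projOnto p q hc x = 0 := by
  simp only [projOnto, LinearMap.coe_comp, Function.comp_apply, Submodule.coe_subtype]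
  exact congrArg Subtype.val ((Submodule.projectionOnto_apply_eq_zero_iff hc).mpr hx)

lemma sub_projOnto_mem (x : g) : x - projOnto p q hc x ∈ q := by
  have hx : x ∈ p ⊔ q := by rw [hc.sup_eq_top]; exact Submodule.mem_top
  obtain ⟨y, hy, z, hz, rfl⟩ := Submodule.mem_sup.mp hx
  rw [map_add, projOnto_eq_self_of_mem hc hy, projOnto_eq_zero_of_mem hc hz, add_zero,
    add_sub_cancel_left]
  exact hz

end Aux


namespace NatRed

variable {g : Type*} [LieRing g] [LieAlgebra ℝ g]

variable (D : NatRed g)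

lemma projm_mem (z : g) : D.projm z ∈ D.m := projOnto_mem _ _ _ _

lemma projm_of_mem {x : g} (hx : x ∈ D.m) : D.projm x = x := projOnto_eq_self_of_mem _ hx

lemma projm_of_mem_h {x : g} (hx : x ∈ D.h) : D.projm x = 0 := projOnto_eq_zero_of_mem _ hx

lemma sub_projm_mem_h (x : g) : x - D.projm x ∈ D.h := sub_projOnto_mem _ x

lemma natred' : ∀ x ∈ D.m, ∀ y ∈ D.m, ∀ z ∈ D.m,
    D.met (D.projm ⁅x, y⁆) z = - D.met y (D.projm ⁅x, z⁆) := D.natred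

lemma lie_mem_m {w x : g} (hw : w ∈ D.h) (hx : x ∈ D.m) : ⁅w, x⁆ ∈ D.m := D.lie_hm w hw x hx

/-- `ad(w)` for `w ∈ h` is a derivation of the product `⟨x,y⟩ = [x,y]_m` on `m`. -/
lemma lie_projm_lie {w z u : g} (hw : w ∈ D.h) (hz : z ∈ D.m) (hu : u ∈ D.m) :
    ⁅w, D.projm ⁅z, u⁆⁆ = D.projm ⁅⁅w, z⁆, u⁆ + D.projm ⁅z, ⁅w, u⁆⁆ := by
  have hdec : ⁅z, u⁆ = (⁅z, u⁆ - D.projm ⁅z, u⁆) + D.projm ⁅z, u⁆ := by abel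
  have h1 : D.projm ⁅w, ⁅z, u⁆⁆ = ⁅w, D.projm ⁅z, u⁆⁆ := by
    conv_lhs => rw [hdec]
    rw [lie_add, map_add, D.projm_of_mem_h (D.h.lie_mem hw (D.sub_projm_mem_h _)),
      D.projm_of_mem (D.lie_mem_m hw (D.projm_mem _)), zero_add]
  rw [← h1, leibniz_lie w z u, map_add]

end NatRed

namespace NatRed

variable {g : Type*} [LieRing g] [LieAlgebra ℝ g]

/-- The bracket-with-`z`-then-project operator on `m` as an endomorphism of `↥D.m`. -/
def mop (D : NatRed g) (z : g) : ↥D.m →ₗ[ℝ] ↥D.m :=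
  LinearMap.codRestrict D.m ((D.projm.comp (LieAlgebra.ad ℝ g z)).comp D.m.subtype)
    (fun _ => D.projm_mem _)

lemma mop_coe (D : NatRed g) (z : g) (u : ↥D.m) : (D.mop z u : g) = D.projm ⁅z, (u : g)⁆ := rfl

/-- The scalar lemma: on an irreducible naturally reductive decomposition, any
symmetric bilinear form which is invariant under all torsion operators is a
multiple of the metric. -/
lemma scalar_lemma [FiniteDimensional ℝ g] (D : NatRed g) (hirr : ¬ D.Reducible)
    (β : LinearMap.BilinForm ℝ g)
    (hsy : ∀ x y : g, β x y = β y x)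
    (hinv : ∀ z ∈ D.m, ∀ u ∈ D.m, ∀ v ∈ D.m,
      β (D.projm ⁅z, u⁆) v = - β u (D.projm ⁅z, v⁆)) :
    ∃ c : ℝ, ∀ u ∈ D.m, ∀ v ∈ D.m, β u v = c * D.met u v := by
  classical
  set M := ↥D.m
  -- the restricted metric
  set B : LinearMap.BilinForm ℝ M := D.met.compl₁₂ D.m.subtype D.m.subtype with hB
  have hBapp : ∀ u v : M, B u v = D.met u v := fun u v => rfl
  have hBsym : ∀ u v : M, B u v = B v u := fun u v => D.met_symm _ _
  have hBnd : B.Nondegenerate := by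
    refine ⟨?_, ?_⟩
    all_goals
      intro u hu
      by_contra hne
      have h0 : (u : g) ≠ 0 := fun h => hne (Subtype.ext h)
      have := D.met_posdef u u.2 h0
      rw [← hBapp u u, hu u] at this
      exact lt_irrefl _ this
  -- the restricted β
  set βM : LinearMap.BilinForm ℝ M := β.compl₁₂ D.m.subtype D.m.subtype with hβM
  have hβapp : ∀ u v : M, βM u v = β u v := fun u v => rfl
  -- the operator representing βM w.r.t. B
  set T : Module.End ℝ M := ((B.toDual hBnd).symm.toLinearMap).comp βM with hT
  have hTapp : ∀ u v : M, B (T u) v = β u v := by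
    intro u v
    have := LinearMap.BilinForm.apply_toDual_symm_apply (B := B) (hB := hBnd) (βM u) v
    exact this
  -- skewness of `mop` w.r.t. `B` and βM-invariance
  have hskew : ∀ z : g, z ∈ D.m → ∀ u v : M, B (D.mop z u) v = - B u (D.mop z v) := by
    intro z hz u v
    rw [hBapp, hBapp, mop_coe, mop_coe]
    exact D.natred' z hz u u.2 v v.2
  have hβskew : ∀ z : g, z ∈ D.m → ∀ u v : M, β (D.mop z u : g) v = - β u (D.mop z v : g) := by
    intro z hz u v
    rw [mop_coe, mop_coe]
    exact hinv z hz u u.2 v v.2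
  have hcomm : ∀ z : g, z ∈ D.m → ∀ u : M, T (D.mop z u) = D.mop z (T u) := by
    intro z hz u
    have key : ∀ v : M, B (T (D.mop z u) - D.mop z (T u)) v = 0 := by
      intro v
      rw [LinearMap.map_sub₂, hTapp, hβskew z hz, hskew z hz, hTapp]
      ring
    have := hBnd.1 _ key
    rwa [sub_eq_zero] at this
  -- inner product structure on M
  letI core : InnerProductSpace.Core ℝ M :=
    { inner := fun u v => B u v
      conj_inner_symm := fun u v => by simpa using hBsym v u
      re_inner_nonneg := by
        intro u
        rcases eq_or_ne u 0 with rfl | hu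
        · simp
        · have h0 : (u : g) ≠ 0 := fun h => hu (Subtype.ext h)
          have := D.met_posdef u u.2 h0
          rw [← hBapp u u] at this
          simpa using this.le
      definite := by
        intro u hu0
        by_contra hne
        have h0 : (u : g) ≠ 0 := fun h => hne (Subtype.ext h)
        have := D.met_posdef u u.2 h0
        rw [← hBapp u u] at this
        have hb : (B u) u = 0 := hu0
        rw [hb] at this
        exact lt_irrefl _ this
      add_left := fun u v w => by simp [LinearMap.map_add₂]
      smul_left := fun u v r => by simp [LinearMap.map_smul₂] }
  letI : NormedAddCommGroup M := core.toNormedAddCommGroup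
  letI : InnerProductSpace ℝ M := InnerProductSpace.ofCore core.toCore
  have hInner : ∀ u v : M, (inner ℝ u v : ℝ) = B u v := fun u v => rfl
  -- symmetry of T
  have hTsym : (T : ↥D.m →ₗ[ℝ] ↥D.m).IsSymmetric := by
    intro u v
    rw [hInner, hInner, hTapp, hBsym, hTapp, hsy]
  rcases subsingleton_or_nontrivial M with hss | hnt
  · refine ⟨0, fun u hu v hv => ?_⟩
    have h0 : (⟨u, hu⟩ : M) = (0 : M) := Subsingleton.elim _ _
    have hu0 : u = 0 := congrArg Subtype.val h0
    simp [hu0]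
  · obtain ⟨μ, hμ⟩ : ∃ μ : ℝ, Module.End.HasEigenvalue T μ :=
      ⟨_, hTsym.hasEigenvalue_iSup_of_finiteDimensional⟩
    set p := Module.End.eigenspace T μ with hp
    by_cases hptop : p = ⊤
    · refine ⟨μ, fun u hu v hv => ?_⟩
      have hmem : (⟨u, hu⟩ : M) ∈ p := hptop ▸ Submodule.mem_top
      have hTu : T ⟨u, hu⟩ = μ • (⟨u, hu⟩ : M) := Module.End.mem_eigenspace_iff.mp hmem
      have h1 := hTapp ⟨u, hu⟩ ⟨v, hv⟩
      rw [hTu, map_smul, LinearMap.smul_apply, hBapp, smul_eq_mul] at h1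
      exact h1.symm
    · exfalso
      haveI : CompleteSpace p := FiniteDimensional.complete ℝ p
      have hic : IsCompl p pᗮ := Submodule.isCompl_orthogonal_of_hasOrthogonalProjection
      have hqne : pᗮ ≠ ⊥ := fun h => hptop (Submodule.orthogonal_eq_bot_iff.mp h)
      apply hirr
      have horth : ∀ u v : M, u ∈ p → v ∈ pᗮ → D.met u v = 0 := by
        intro u v hu hv
        have := (Submodule.mem_orthogonal p v).mp hv u hu
        rw [hInner, hBapp] at this
        exact this
      have hinvp : ∀ z ∈ D.m, ∀ u : M, u ∈ p → D.mop z u ∈ p := by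
        intro z hz u hu
        rw [hp, Module.End.mem_eigenspace_iff] at hu ⊢
        rw [hcomm z hz, hu, map_smul]
      have hinvq : ∀ z ∈ D.m, ∀ u : M, u ∈ pᗮ → D.mop z u ∈ pᗮ := by
        intro z hz u hu
        rw [Submodule.mem_orthogonal] at hu ⊢
        intro x hx
        have h1 : B (D.mop z x) u = - B x (D.mop z u) := hskew z hz x u
        have h2 : B (D.mop z x) u = 0 := by
          rw [← hInner]
          exact hu _ (hinvp z hz x hx)
        rw [hInner, ← neg_eq_zero, ← h1, h2]
      -- the two key vanishing statements
      have key1 : ∀ x ∈ D.m, ∀ u v : M, u ∈ p → v ∈ pᗮ →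
          D.met (D.projm ⁅x, (u : g)⁆) v = 0 := by
        intro x hx u v hu hv
        rw [← D.mop_coe]
        exact horth _ v (hinvp x hx u hu) hv
      have key2 : ∀ x ∈ D.m, ∀ u v : M, u ∈ pᗮ → v ∈ p →
          D.met (D.projm ⁅x, (u : g)⁆) v = 0 := by
        intro x hx u v hu hv
        rw [← D.mop_coe, D.met_symm]
        exact horth v _ hv (hinvq x hx u hu)
      refine ⟨p.map D.m.subtype, pᗮ.map D.m.subtype, Submodule.map_subtype_le _ _,
        Submodule.map_subtype_le _ _, ?_, ?_, ?_, ?_, ?_⟩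
      · obtain ⟨u, hu, hune⟩ := (Submodule.ne_bot_iff _).mp hμ
        exact (Submodule.ne_bot_iff _).mpr ⟨u, Submodule.mem_map_of_mem hu,
          fun h => hune (Subtype.ext h)⟩
      · obtain ⟨u, hu, hune⟩ := (Submodule.ne_bot_iff _).mp hqne
        exact (Submodule.ne_bot_iff _).mpr ⟨u, Submodule.mem_map_of_mem hu,
          fun h => hune (Subtype.ext h)⟩
      · rw [← Submodule.map_sup, hic.sup_eq_top, Submodule.map_top, Submodule.range_subtype]
      · rintro x ⟨u, hu, rfl⟩ y ⟨v, hv, rfl⟩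
        exact horth u v hu hv
      · intro x y z hx hy hz hnot
        have hT3 : D.T3 x y z = - D.met (D.projm ⁅x, y⁆) z := by
          show D.met (- D.projm ⁅x, y⁆) z = _
          rw [LinearMap.map_neg₂]
        have hskew12 : D.met (D.projm ⁅x, y⁆) z = - D.met (D.projm ⁅y, x⁆) z := by
          rw [← lie_skew x y, map_neg, LinearMap.map_neg₂]
        have hxm : x ∈ D.m := by
          rcases hx with h | h
          exacts [Submodule.map_subtype_le _ _ h, Submodule.map_subtype_le _ _ h]
        rcases hy with hy | hy <;> rcases hz with hz | hz
        · -- y ∈ p₁, z ∈ p₁ : x must be in p₂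
          rcases hx with hx | hx
          · exact absurd (Or.inl ⟨hx, hy, hz⟩) hnot
          obtain ⟨x', hx', rfl⟩ := hx
          obtain ⟨y', hy', rfl⟩ := hy
          obtain ⟨z', hz', rfl⟩ := hz
          rw [hT3, hskew12, neg_neg]
          exact key2 (y' : g) y'.2 x' z' hx' hz'
        · -- y ∈ p₁, z ∈ p₂
          obtain ⟨y', hy', rfl⟩ := hy
          obtain ⟨z', hz', rfl⟩ := hz
          rw [hT3, neg_eq_zero]
          exact key1 x hxm y' z' hy' hz'
        · -- y ∈ p₂, z ∈ p₁
          obtain ⟨y', hy', rfl⟩ := hy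
          obtain ⟨z', hz', rfl⟩ := hz
          rw [hT3, neg_eq_zero]
          exact key2 x hxm y' z' hy' hz'
        · -- y ∈ p₂, z ∈ p₂ : x must be in p₁
          rcases hx with hx | hx
          swap
          · exact absurd (Or.inr ⟨hx, hy, hz⟩) hnot
          obtain ⟨x', hx', rfl⟩ := hx
          obtain ⟨y', hy', rfl⟩ := hy
          obtain ⟨z', hz', rfl⟩ := hz
          rw [hT3, hskew12, neg_neg]
          exact key1 (y' : g) y'.2 x' z' hx' hz'


/-- For every `w ∈ h`, the symmetrization of `ad(w)` on `m` is a multiple of the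
identity (irreducible case). -/
lemma ad_sym_scalar [FiniteDimensional ℝ g] (D : NatRed g) (hirr : ¬ D.Reducible)
    {w : g} (hw : w ∈ D.h) :
    ∃ c : ℝ, ∀ u ∈ D.m, ∀ v ∈ D.m,
      D.met ⁅w, u⁆ v + D.met u ⁅w, v⁆ = c * D.met u v := by
  set β : LinearMap.BilinForm ℝ g :=
    D.met.compl₁₂ (LieAlgebra.ad ℝ g w) LinearMap.id
      + D.met.compl₁₂ LinearMap.id (LieAlgebra.ad ℝ g w) with hβ
  have hβapp : ∀ x y : g, β x y = D.met ⁅w, x⁆ y + D.met x ⁅w, y⁆ := by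
    intro x y
    simp [hβ, LinearMap.compl₁₂_apply, LieAlgebra.ad_apply]
  have hsy : ∀ x y : g, β x y = β y x := by
    intro x y
    rw [hβapp, hβapp, D.met_symm ⁅w, x⁆ y, D.met_symm x ⁅w, y⁆]
    ring
  have hinv : ∀ z ∈ D.m, ∀ u ∈ D.m, ∀ v ∈ D.m,
      β (D.projm ⁅z, u⁆) v = - β u (D.projm ⁅z, v⁆) := by
    intro z hz u hu v hv
    rw [hβapp, hβapp, D.lie_projm_lie hw hz hu, D.lie_projm_lie hw hz hv,
      LinearMap.map_add₂, map_add]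
    linear_combination (D.natred' ⁅w, z⁆ (D.lie_mem_m hw hz) u hu v hv)
      + (D.natred' z hz ⁅w, u⁆ (D.lie_mem_m hw hu) v hv)
      + (D.natred' z hz u hu ⁅w, v⁆ (D.lie_mem_m hw hv))
  obtain ⟨c, hc⟩ := D.scalar_lemma hirr β hsy hinv
  exact ⟨c, fun u hu v hv => by rw [← hβapp]; exact hc u hu v hv⟩


/-- Orthogonal decomposition of `m` along a subspace `p ≤ m`. -/
lemma orth_decomp [FiniteDimensional ℝ g] (D : NatRed g) (p : Submodule ℝ g) (hp : p ≤ D.m) :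
    ∀ u ∈ D.m, ∃ x ∈ p, ∃ y ∈ D.m ⊓ LinearMap.BilinForm.orthogonal D.met p, u = x + y := by
  intro u hu
  set B := D.met.restrict D.m with hB
  have hBapp : ∀ x y : ↥D.m, B x y = D.met x y := fun x y => rfl
  have hrefl : B.IsRefl := by
    intro x y hxy
    rw [hBapp] at hxy ⊢
    rw [D.met_symm]
    exact hxy
  set W := p.comap D.m.subtype with hW
  have hnd : (B.restrict W).Nondegenerate := by
    refine ⟨?_, ?_⟩
    all_goals
      intro x hx
      by_contra hne
      have h0 : ((x : ↥D.m) : g) ≠ 0 := by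
        intro h
        exact hne (Subtype.ext (Subtype.ext h))
      have hpos := D.met_posdef _ (x : ↥D.m).2 h0
      have hz : D.met ((x : ↥D.m) : g) ((x : ↥D.m) : g) = 0 := hx x
      rw [hz] at hpos
      exact lt_irrefl _ hpos
  have hic := LinearMap.BilinForm.isCompl_orthogonal_of_restrict_nondegenerate hrefl hnd
  have hu' : (⟨u, hu⟩ : ↥D.m) ∈ W ⊔ B.orthogonal W := by
    rw [hic.sup_eq_top]; trivial
  obtain ⟨x', hx', y', hy', hxy⟩ := Submodule.mem_sup.mp hu'
  refine ⟨(x' : g), hx', (y' : g), ?_, ?_⟩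
  · refine Submodule.mem_inf.mpr ⟨y'.2, ?_⟩
    rw [LinearMap.BilinForm.mem_orthogonal_iff]
    intro n hn
    have hmem : (⟨n, hp hn⟩ : ↥D.m) ∈ W := by
      simp only [hW, Submodule.mem_comap]
      exact hn
    have := LinearMap.BilinForm.mem_orthogonal_iff.mp hy' _ hmem
    exact this
  · have := congrArg (Subtype.val) hxy
    simpa using this.symm

end NatRed


/-- Let `g = h ⊕ m` be an effective irreducible naturally
reductive decomposition with abelian ideal `a` (so `a ∩ m = a ∩ h = 0` and
`g = h ⊕ a ⊕ m⁻`).  With `π'_h : g → h` the projection along `a ⊕ m⁻`,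
`h₀ := π'_h([m⁻,m⁻])` and `h₀^⊥` a complementary ideal of `h₀` in `h`:
`a ⊕ h₀ ⊕ m⁻` is a subalgebra, `g ≅ h₀^⊥ ⋉ (a ⊕ h₀ ⊕ m⁻)`, `a` is central in
`a ⊕ h₀ ⊕ m⁻`, and the quotient `g⁻ = (a ⊕ h₀ ⊕ m⁻)/a ≅ h₀ ⊕ m⁻` is a naturally
reductive decomposition of the base space with `g⁻` its transvection algebra. -/
theorem statement15 {g : Type*} [LieRing g] [LieAlgebra ℝ g] [FiniteDimensional ℝ g]
    (D : NatRed g) (hEff : D.Effective) (hirr : ¬ D.Reducible)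
    (a : LieIdeal ℝ g) (habel : IsAbelianIdeal a)
    (ham : a.toSubmodule ⊓ D.m = ⊥) (hah : a.toSubmodule ⊓ D.h.toSubmodule = ⊥)
    (mp : Submodule ℝ g) (hmp : mp = Submodule.map D.projm a.toSubmodule)
    (mn : Submodule ℝ g) (hmn : mn = D.m ⊓ LinearMap.BilinForm.orthogonal D.met mp)
    -- `g = h ⊕ (a ⊕ m⁻)` as vector spaces; `π'_h` the projection onto `h`
    (hco : IsCompl D.h.toSubmodule (a.toSubmodule ⊔ mn))
    (πh : g →ₗ[ℝ] g) (hπh : πh = projOnto D.h.toSubmodule (a.toSubmodule ⊔ mn) hco)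
    (h0 : Submodule ℝ g)
    (hh0 : h0 = Submodule.span ℝ {z : g | ∃ x ∈ mn, ∃ y ∈ mn, z = πh ⁅x, y⁆})
    -- `h₀^⊥`, a complementary ideal of `h₀` in `h`
    (h0c : Submodule ℝ g) (hh0c : h0c ≤ D.h.toSubmodule)
    (h0cideal : ∀ x ∈ D.h, ∀ y ∈ h0c, ⁅x, y⁆ ∈ h0c)
    (hsum : h0 ⊔ h0c = D.h.toSubmodule) (hint : h0 ⊓ h0c = ⊥) :
    -- `s := a ⊕ h₀ ⊕ m⁻` is a subalgebra of `g`
    (∀ x ∈ a.toSubmodule ⊔ h0 ⊔ mn, ∀ y ∈ a.toSubmodule ⊔ h0 ⊔ mn,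
        ⁅x, y⁆ ∈ a.toSubmodule ⊔ h0 ⊔ mn) ∧
    -- `g ≅ h₀^⊥ ⋉ s`
    IsCompl h0c (a.toSubmodule ⊔ h0 ⊔ mn) ∧
    (∀ x ∈ h0c, ∀ y ∈ a.toSubmodule ⊔ h0 ⊔ mn, ⁅x, y⁆ ∈ a.toSubmodule ⊔ h0 ⊔ mn) ∧
    -- `a` is contained in the center of `s`
    (∀ x ∈ a, ∀ y ∈ a.toSubmodule ⊔ h0 ⊔ mn, ⁅x, y⁆ = 0) ∧
    -- the quotient `g⁻ = s/a ≅ h₀ ⊕ m⁻` is a naturally reductive decomposition of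
    -- the base space with isotropy algebra `h₀`, metric `g|_{m⁻×m⁻}`, and `g⁻` its
    -- transvection algebra:
    (∀ x ∈ D.h, ∀ y ∈ h0, ⁅x, y⁆ ∈ h0) ∧               -- `h₀` is an ideal of `h`
    (∀ x ∈ h0, ∀ y ∈ h0, ⁅x, y⁆ ∈ h0) ∧                 -- `h₀` is a subalgebra
    (∀ x ∈ h0, ∀ y ∈ mn, ⁅x, y⁆ ∈ mn) ∧                 -- `[h₀, m⁻] ⊆ m⁻`
    (∀ x ∈ mn, ∀ y ∈ mn, ⁅x, y⁆ ∈ a.toSubmodule ⊔ h0 ⊔ mn) ∧  -- quotient-closed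
    (∀ x ∈ mn, ∀ y ∈ mn, ∀ z ∈ mn,                       -- naturally reductive
        D.met (D.projm ⁅x, y⁆) z = - D.met y (D.projm ⁅x, z⁆)) ∧
    (∀ k ∈ h0, (∀ y ∈ mn, ⁅k, y⁆ = 0) → k = 0) := by     -- effective (transvection)
  classical
  -- basic facts
  have hmnm : mn ≤ D.m := by rw [hmn]; exact inf_le_left
  have hmpm : mp ≤ D.m := by
    rw [hmp]
    rintro x hx
    obtain ⟨v, _, rfl⟩ := Submodule.mem_map.mp hx
    exact D.projm_mem v
  have horthog : ∀ q ∈ mp, ∀ u ∈ mn, D.met q u = 0 := by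
    intro q hq u hu
    rw [hmn] at hu
    exact (LinearMap.BilinForm.mem_orthogonal_iff.mp hu.2) q hq
  have horthog' : ∀ u ∈ mn, ∀ q ∈ mp, D.met u q = 0 := by
    intro u hu q hq
    rw [D.met_symm]
    exact horthog q hq u hu
  have hvm_mem : ∀ v ∈ a.toSubmodule, D.projm v ∈ mp := by
    intro v hv
    rw [hmp]
    exact Submodule.mem_map_of_mem hv
  -- [h, mp] ⊆ mp
  have hhmp : ∀ k ∈ D.h, ∀ q ∈ mp, ⁅k, q⁆ ∈ mp := by
    intro k hk q hq
    rw [hmp] at hq ⊢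
    obtain ⟨v, hv, rfl⟩ := Submodule.mem_map.mp hq
    have hvh : v - D.projm v ∈ D.h := D.sub_projm_mem_h v
    have hm : ⁅k, D.projm v⁆ ∈ D.m := D.lie_mem_m hk (D.projm_mem v)
    have heq : ⁅k, D.projm v⁆ = D.projm ⁅k, v⁆ := by
      have h1 : ⁅k, D.projm v⁆ = ⁅k, v⁆ - ⁅k, v - D.projm v⁆ := by
        rw [lie_sub]; abel
      rw [← D.projm_of_mem hm, h1, map_sub,
        D.projm_of_mem_h (D.h.lie_mem hk hvh), sub_zero]
    rw [heq]
    exact Submodule.mem_map_of_mem (a.lie_mem hv)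
  -- symmetrized ad is scalar
  have hE := fun w (hw : w ∈ D.h) => D.ad_sym_scalar hirr hw
  -- [h, mn] ⊆ mn
  have hhmn : ∀ w ∈ D.h, ∀ u ∈ mn, ⁅w, u⁆ ∈ mn := by
    intro w hw u hu
    obtain ⟨c, hc⟩ := hE w hw
    rw [hmn]
    refine Submodule.mem_inf.mpr ⟨D.lie_mem_m hw (hmnm hu), ?_⟩
    rw [LinearMap.BilinForm.mem_orthogonal_iff]
    intro q hq
    have h1 := hc u (hmnm hu) q (hmpm hq)
    have h2 : D.met u q = 0 := horthog' u hu q hq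
    have h3 : D.met u ⁅w, q⁆ = 0 := horthog' u hu _ (hhmp w hw q hq)
    have h4 : D.met ⁅w, u⁆ q = 0 := by
      rw [h3, h2] at h1
      linarith
    show D.met q ⁅w, u⁆ = 0
    rw [D.met_symm]
    exact h4
  -- πh basics
  have hπh_mem : ∀ z : g, πh z ∈ D.h := by
    intro z; rw [hπh]; exact projOnto_mem _ _ _ _
  have hπh_id : ∀ x ∈ D.h.toSubmodule, πh x = x := by
    intro x hx; rw [hπh]; exact projOnto_eq_self_of_mem _ hx
  have hπh_zero : ∀ x ∈ a.toSubmodule ⊔ mn, πh x = 0 := by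
    intro x hx; rw [hπh]; exact projOnto_eq_zero_of_mem _ hx
  have hπh_dec : ∀ z : g, z - πh z ∈ a.toSubmodule ⊔ mn := by
    intro z; rw [hπh]; exact sub_projOnto_mem _ z
  -- decomposition of brackets of mn elements
  have hdecmn : ∀ x ∈ mn, ∀ y ∈ mn, ∃ α ∈ a.toSubmodule, ∃ μ ∈ mn,
      ⁅x, y⁆ = πh ⁅x, y⁆ + α + μ := by
    intro x hx y hy
    obtain ⟨α, hα, μ, hμ, hαμ⟩ := Submodule.mem_sup.mp (hπh_dec ⁅x, y⁆)
    refine ⟨α, hα, μ, hμ, ?_⟩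
    have h2 : ⁅x, y⁆ = πh ⁅x, y⁆ + (α + μ) := by rw [hαμ]; abel
    conv_lhs => rw [h2]
    rw [add_assoc]
  -- P1 : [a, mn] = 0
  have hamn : ∀ v ∈ a.toSubmodule, ∀ u ∈ mn, ⁅v, u⁆ = 0 := by
    intro v hv u hu
    have hξa : ⁅v, u⁆ ∈ a.toSubmodule := by
      rw [← lie_skew]
      exact Submodule.neg_mem _ (a.lie_mem hv)
    have hξm : D.projm ⁅v, u⁆ ∈ mp := hvm_mem _ hξa
    have hzero : ∀ t ∈ a.toSubmodule, D.met (D.projm ⁅v, u⁆) (D.projm t) = 0 := by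
      intro t ht
      have hvh : v - D.projm v ∈ D.h := D.sub_projm_mem_h v
      have hth : t - D.projm t ∈ D.h := D.sub_projm_mem_h t
      have hsplit : D.projm ⁅v, u⁆ = ⁅v - D.projm v, u⁆ + D.projm ⁅D.projm v, u⁆ := by
        have h1 : ⁅v, u⁆ = ⁅v - D.projm v, u⁆ + ⁅D.projm v, u⁆ := by
          rw [sub_lie]; abel
        rw [h1, map_add, D.projm_of_mem (D.lie_mem_m hvh (hmnm hu))]
      have hfst : D.met ⁅v - D.projm v, u⁆ (D.projm t) = 0 :=
        horthog' _ (hhmn _ hvh u hu) _ (hvm_mem t ht)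
      have hsnd : D.met (D.projm ⁅D.projm v, u⁆) (D.projm t) = 0 := by
        have hnr := D.natred' (D.projm v) (D.projm_mem v) u (hmnm hu)
          (D.projm t) (D.projm_mem t)
        have hproj : D.projm ⁅D.projm v, D.projm t⁆
            = ⁅t - D.projm t, D.projm v⁆ - ⁅v - D.projm v, D.projm t⁆ := by
          have hexp : ⁅D.projm v, D.projm t⁆
              = ⁅v, t⁆ - ⁅v, t - D.projm t⁆ - ⁅v - D.projm v, t⁆
                + ⁅v - D.projm v, t - D.projm t⁆ := by
            simp only [lie_sub, sub_lie]; abel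
          have habel0 : ⁅v, t⁆ = 0 := habel v hv t ht
          have e1 : D.projm ⁅v, t - D.projm t⁆ = - ⁅t - D.projm t, D.projm v⁆ := by
            have h2 : ⁅v, t - D.projm t⁆
                = - (⁅t - D.projm t, v - D.projm v⁆ + ⁅t - D.projm t, D.projm v⁆) := by
              rw [← lie_add,
                show v - D.projm v + D.projm v = v by abel, ← lie_skew]
            rw [h2, map_neg, map_add,
              D.projm_of_mem_h (D.h.lie_mem hth hvh),
              D.projm_of_mem (D.lie_mem_m hth (D.projm_mem v)), zero_add]
          have e2 : D.projm ⁅v - D.projm v, t⁆ = ⁅v - D.projm v, D.projm t⁆ := by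
            have h2 : ⁅v - D.projm v, t⁆
                = ⁅v - D.projm v, t - D.projm t⁆ + ⁅v - D.projm v, D.projm t⁆ := by
              rw [← lie_add, show t - D.projm t + D.projm t = t by abel]
            rw [h2, map_add, D.projm_of_mem_h (D.h.lie_mem hvh hth),
              D.projm_of_mem (D.lie_mem_m hvh (D.projm_mem t)), zero_add]
          have e3 : D.projm ⁅v - D.projm v, t - D.projm t⁆ = 0 :=
            D.projm_of_mem_h (D.h.lie_mem hvh hth)
          rw [hexp, habel0, map_add, map_sub, map_sub, map_zero, e1, e2, e3]
          abel
        have hPmem : ⁅t - D.projm t, D.projm v⁆ - ⁅v - D.projm v, D.projm t⁆ ∈ mp :=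
          Submodule.sub_mem mp (hhmp _ hth _ (hvm_mem v hv)) (hhmp _ hvh _ (hvm_mem t ht))
        rw [hnr, hproj,
          show D.met u (⁅t - D.projm t, D.projm v⁆ - ⁅v - D.projm v, D.projm t⁆) = 0
          from horthog' u hu _ hPmem]
        ring
      rw [hsplit, LinearMap.map_add₂, hfst, hsnd, add_zero]
    have hproj0 : D.projm ⁅v, u⁆ = 0 := by
      by_contra hne
      obtain ⟨t, ht, hEq⟩ := Submodule.mem_map.mp (by rw [hmp] at hξm; exact hξm)
      have h5 := hzero t ht
      rw [hEq] at h5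
      have hpos := D.met_posdef _ (D.projm_mem ⁅v, u⁆) hne
      rw [h5] at hpos
      exact lt_irrefl _ hpos
    have hξh : ⁅v, u⁆ ∈ D.h.toSubmodule := by
      have h6 := D.sub_projm_mem_h ⁅v, u⁆
      rwa [hproj0, sub_zero] at h6
    have h7 : ⁅v, u⁆ ∈ a.toSubmodule ⊓ D.h.toSubmodule := ⟨hξa, hξh⟩
    rw [hah] at h7
    exact h7
  -- P2 : [a, h0] = 0
  have hah0 : ∀ v ∈ a.toSubmodule, ∀ k ∈ h0, ⁅v, k⁆ = 0 := by
    intro v hv k hk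
    rw [hh0] at hk
    refine Submodule.span_induction (p := fun z _ => ⁅v, z⁆ = 0) ?_ ?_ ?_ ?_ hk
    · rintro z ⟨x, hx, y, hy, rfl⟩
      obtain ⟨α, hα, μ, hμ, hdec⟩ := hdecmn x hx y hy
      have hπ : πh ⁅x, y⁆ = ⁅x, y⁆ - α - μ := by
        conv_rhs => rw [hdec]
        abel
      rw [hπ, lie_sub, lie_sub, habel v hv α hα, hamn v hv μ hμ]
      have h1 : ⁅v, ⁅x, y⁆⁆ = 0 := by
        rw [leibniz_lie, hamn v hv x hx, hamn v hv y hy]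
        simp
      rw [h1]
      simp
    · simp
    · intro x y _ _ hx hy
      rw [lie_add, hx, hy, add_zero]
    · intro c x _ hx
      rw [lie_smul, hx, smul_zero]
  -- h0 ≤ h
  have hh0h : h0 ≤ D.h.toSubmodule := by
    rw [hh0, Submodule.span_le]
    rintro z ⟨x, _, y, _, rfl⟩
    exact hπh_mem ⁅x, y⁆
  -- P3 : [h, h0] ⊆ h0
  have hP3 : ∀ w ∈ D.h, ∀ k ∈ h0, ⁅w, k⁆ ∈ h0 := by
    intro w hw k hk
    rw [hh0] at hk ⊢
    refine Submodule.span_induction (p := fun z _ =>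
      ⁅w, z⁆ ∈ Submodule.span ℝ {z : g | ∃ x ∈ mn, ∃ y ∈ mn, z = πh ⁅x, y⁆}) ?_ ?_ ?_ ?_ hk
    · rintro z ⟨x, hx, y, hy, rfl⟩
      obtain ⟨α, hα, μ, hμ, hdec⟩ := hdecmn x hx y hy
      have hπ : πh ⁅x, y⁆ = ⁅x, y⁆ - α - μ := by
        conv_rhs => rw [hdec]
        abel
      have hwk : ⁅w, πh ⁅x, y⁆⁆ ∈ D.h.toSubmodule := D.h.lie_mem hw (hπh_mem _)
      have heq : ⁅w, πh ⁅x, y⁆⁆ = πh ⁅w, πh ⁅x, y⁆⁆ := (hπh_id _ hwk).symm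
      have hexp : ⁅w, πh ⁅x, y⁆⁆ = ⁅⁅w, x⁆, y⁆ + ⁅x, ⁅w, y⁆⁆ - ⁅w, α⁆ - ⁅w, μ⁆ := by
        rw [hπ, lie_sub, lie_sub, leibniz_lie]
      rw [heq, hexp]
      have hπα : πh ⁅w, α⁆ = 0 :=
        hπh_zero _ (Submodule.mem_sup_left (a.lie_mem hα))
      have hπμ : πh ⁅w, μ⁆ = 0 :=
        hπh_zero _ (Submodule.mem_sup_right (hhmn w hw μ hμ))
      rw [map_sub, map_sub, map_add, hπα, hπμ, sub_zero, sub_zero]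
      have hg1 : πh ⁅⁅w, x⁆, y⁆ ∈ Submodule.span ℝ
          {z : g | ∃ x ∈ mn, ∃ y ∈ mn, z = πh ⁅x, y⁆} :=
        Submodule.subset_span ⟨⁅w, x⁆, hhmn w hw x hx, y, hy, rfl⟩
      have hg2 : πh ⁅x, ⁅w, y⁆⁆ ∈ Submodule.span ℝ
          {z : g | ∃ x ∈ mn, ∃ y ∈ mn, z = πh ⁅x, y⁆} :=
        Submodule.subset_span ⟨x, hx, ⁅w, y⁆, hhmn w hw y hy, rfl⟩
      exact Submodule.add_mem _ hg1 hg2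
    · simp
    · intro x y _ _ hx hy
      rw [lie_add]
      exact Submodule.add_mem _ hx hy
    · intro c x _ hx
      rw [lie_smul]
      exact Submodule.smul_mem _ _ hx
  -- m = mp + mn
  have hmdec : ∀ u ∈ D.m, ∃ q ∈ mp, ∃ μ ∈ mn, u = q + μ := by
    intro u hu
    obtain ⟨q, hq, μ, hμ, h⟩ := D.orth_decomp mp hmpm u hu
    exact ⟨q, hq, μ, by rw [hmn]; exact hμ, h⟩
  -- membership in s
  have hs_a : ∀ α ∈ a.toSubmodule, α ∈ a.toSubmodule ⊔ h0 ⊔ mn :=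
    fun α hα => Submodule.mem_sup_left (Submodule.mem_sup_left hα)
  have hs_h0 : ∀ k ∈ h0, k ∈ a.toSubmodule ⊔ h0 ⊔ mn :=
    fun k hk => Submodule.mem_sup_left (Submodule.mem_sup_right hk)
  have hs_mn : ∀ μ ∈ mn, μ ∈ a.toSubmodule ⊔ h0 ⊔ mn :=
    fun μ hμ => Submodule.mem_sup_right hμ
  have hs_dec : ∀ y ∈ a.toSubmodule ⊔ h0 ⊔ mn, ∃ α ∈ a.toSubmodule, ∃ k ∈ h0,
      ∃ μ ∈ mn, y = α + k + μ := by
    intro y hy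
    obtain ⟨t, ht, μ, hμ, rfl⟩ := Submodule.mem_sup.mp hy
    obtain ⟨α, hα, k, hk, rfl⟩ := Submodule.mem_sup.mp ht
    exact ⟨α, hα, k, hk, μ, hμ, rfl⟩
  -- C4 : a is central in s
  have hC4 : ∀ v ∈ a, ∀ y ∈ a.toSubmodule ⊔ h0 ⊔ mn, ⁅v, y⁆ = 0 := by
    intro v hv y hy
    obtain ⟨α, hα, k, hk, μ, hμ, rfl⟩ := hs_dec y hy
    rw [lie_add, lie_add, habel v hv α hα, hah0 v hv k hk, hamn v hv μ hμ]
    simp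
  -- C8 : [mn, mn] ⊆ s
  have hC8 : ∀ x ∈ mn, ∀ y ∈ mn, ⁅x, y⁆ ∈ a.toSubmodule ⊔ h0 ⊔ mn := by
    intro x hx y hy
    obtain ⟨α, hα, μ, hμ, hdec⟩ := hdecmn x hx y hy
    rw [hdec]
    refine Submodule.add_mem _ (Submodule.add_mem _ ?_ (hs_a α hα)) (hs_mn μ hμ)
    refine hs_h0 _ ?_
    rw [hh0]
    exact Submodule.subset_span ⟨x, hx, y, hy, rfl⟩
  -- C7 : [h0, mn] ⊆ mn
  have hC7 : ∀ k ∈ h0, ∀ u ∈ mn, ⁅k, u⁆ ∈ mn := fun k hk => hhmn k (hh0h hk)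
  refine ⟨?_, ?_, ?_, hC4, hP3, fun x hx => hP3 x (hh0h hx), hC7, hC8,
    fun x hx y hy z hz => D.natred' x (hmnm hx) y (hmnm hy) z (hmnm hz), ?_⟩
  -- C1 : s is a subalgebra
  · intro x hx y hy
    obtain ⟨α, hα, k, hk, μ, hμ, rfl⟩ := hs_dec x hx
    obtain ⟨α', hα', k', hk', μ', hμ', rfl⟩ := hs_dec y hy
    have hy' : α' + k' + μ' ∈ a.toSubmodule ⊔ h0 ⊔ mn := hy
    rw [add_lie, add_lie]
    have hk1 : ⁅k, α'⁆ = 0 := by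
      rw [← lie_skew, hC4 α' hα' k (hs_h0 k hk), neg_zero]
    have hm1 : ⁅μ, α'⁆ = 0 := by
      rw [← lie_skew, hC4 α' hα' μ (hs_mn μ hμ), neg_zero]
    have hm2 : ⁅μ, k'⁆ ∈ mn := by
      rw [← lie_skew]
      exact Submodule.neg_mem _ (hC7 k' hk' μ hμ)
    refine Submodule.add_mem _ (Submodule.add_mem _ ?_ ?_) ?_
    · rw [hC4 α hα _ hy']
      exact Submodule.zero_mem _
    · rw [lie_add, lie_add]
      refine Submodule.add_mem _ (Submodule.add_mem _ ?_ ?_) ?_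
      · rw [hk1]; exact Submodule.zero_mem _
      · exact hs_h0 _ (hP3 k (hh0h hk) k' hk')
      · exact hs_mn _ (hC7 k hk μ' hμ')
    · rw [lie_add, lie_add]
      refine Submodule.add_mem _ (Submodule.add_mem _ ?_ ?_) ?_
      · rw [hm1]; exact Submodule.zero_mem _
      · exact hs_mn _ hm2
      · exact hC8 μ hμ μ' hμ'
  -- C2 : IsCompl h0c s
  · constructor
    · rw [Submodule.disjoint_def]
      intro x hxc hxs
      obtain ⟨α, hα, k, hk, μ, hμ, hxeq⟩ := hs_dec x hxs
      have h1 : x - k ∈ D.h.toSubmodule := Submodule.sub_mem _ (hh0c hxc) (hh0h hk)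
      have h2 : x - k ∈ a.toSubmodule ⊔ mn := by
        rw [hxeq, show α + k + μ - k = α + μ by abel]
        exact Submodule.add_mem _ (Submodule.mem_sup_left hα) (Submodule.mem_sup_right hμ)
      have h3 : x - k = 0 := Submodule.disjoint_def.mp hco.disjoint _ h1 h2
      have hxk : x = k := by
        have := sub_eq_zero.mp h3; exact this
      have h4 : x ∈ h0 ⊓ h0c := ⟨hxk ▸ hk, hxc⟩
      rw [hint] at h4
      exact h4
    · rw [codisjoint_iff]
      have htop : D.h.toSubmodule ⊔ (a.toSubmodule ⊔ mn) = ⊤ := codisjoint_iff.mp hco.codisjoint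
      rw [eq_top_iff, ← htop]
      refine sup_le ?_ ?_
      · rw [← hsum]
        refine sup_le ?_ ?_
        · exact le_trans (fun x hx => hs_h0 x hx) le_sup_right
        · exact le_sup_left
      · refine sup_le ?_ ?_
        · exact le_trans (fun x hx => hs_a x hx) le_sup_right
        · exact le_trans (fun x hx => hs_mn x hx) le_sup_right
  -- C3 : [h0c, s] ⊆ s
  · intro x hx y hy
    obtain ⟨α, hα, k, hk, μ, hμ, rfl⟩ := hs_dec y hy
    rw [lie_add, lie_add]
    refine Submodule.add_mem _ (Submodule.add_mem _ ?_ ?_) ?_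
    · exact hs_a _ (a.lie_mem hα)
    · exact hs_h0 _ (hP3 x (hh0c hx) k hk)
    · exact hs_mn _ (hhmn x (hh0c hx) μ hμ)
  -- C10 : effectivity of the base
  · intro k hk hkmn
    have hkh : k ∈ D.h := hh0h hk
    refine hEff k hkh ?_
    intro u hu
    obtain ⟨q, hq, μ, hμ, rfl⟩ := hmdec u hu
    rw [lie_add, hkmn μ hμ, add_zero]
    rw [hmp] at hq
    obtain ⟨v, hv, rfl⟩ := Submodule.mem_map.mp hq
    have h1 : ⁅k, v⁆ = 0 := by
      rw [← lie_skew, hah0 v hv k hk, neg_zero]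
    have hm : ⁅k, D.projm v⁆ ∈ D.m := D.lie_mem_m hkh (D.projm_mem v)
    have hhh : ⁅k, D.projm v⁆ ∈ D.h.toSubmodule := by
      have heq : ⁅k, D.projm v⁆ = - ⁅k, v - D.projm v⁆ := by
        rw [lie_sub, h1]; abel
      rw [heq]
      exact Submodule.neg_mem _ (D.h.lie_mem hkh (D.sub_projm_mem_h v))
    exact Submodule.disjoint_def.mp D.compl.disjoint _ hhh hm
end
end
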